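/- arXiv:1002.4187 — 4 statements merged into one kernel-verified Lean document; each statement's English description precedes it below -/
import Mathlib

section
/- Let a_1 < ... < a_n be positive integers with a_i ≤ 2i - 1, let d = Σ(a_i - i), and let p ≤ -n be an integer. Then (-1)^d · det( binom(p + i - 1, a_i - j) )_{1≤i,j≤n} equals det( binom(|p| + a_i - i - j, a_i - j) )_{1≤i,j≤n}, a nonnegative integer counting weakly increasing (in rows and columns) fillings of Y(a) with entries in {0,...,|p|-n}. In particular, for p = -n this determinant equals (-1)^d. -/
/-- The generalized binomial coefficient `r choose k` for integer `r`, as a rational. -/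
def zchoose (r : ℤ) (k : ℕ) : ℚ :=
  (∏ s ∈ Finset.range k, ((r : ℚ) - s)) / (k.factorial : ℚ)

/-- Totalization of a sequence `a : Fin n → ℕ` to `ℕ → ℕ` (value `0` out of range). -/
def extSeq (n : ℕ) (a : Fin n → ℕ) : ℕ → ℕ := fun m => if h : m < n then a ⟨m, h⟩ else 0

/-- The Young diagram `Y(a)` associated to a sequence `a₁ < ⋯ < aₙ`:
its `(n+1-i)`-th row from the top has `aᵢ - i` boxes. Rows and columns are 0-indexed. -/
def cellsOf (n : ℕ) (a : Fin n → ℕ) : Finset (ℕ × ℕ) :=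
  ((Finset.range n) ×ˢ (Finset.range (2 * n))).filter fun u =>
    u.2 < extSeq n a (n - 1 - u.1) - (n - u.1)

/-!
The entry `binom(|p| + a_i - i - j, a_i - j)` counts lattice paths from the source `j` to the sink
`i`, so by Lindström–Gessel–Viennot the second determinant is a signed count of path families.
Switching the tails of two paths at the first meeting point is a sign-reversing involution on
intersecting families, and a family whose permutation has an inversion must intersect; what
remains are the non-intersecting families for the identity. Sorting the up-steps of path `i` and
subtracting their ranks and `n` turns them into row `n + 1 - i` of a weakly increasing filling of
`Y(a)` with entries at most `|p| - n`, and non-intersection becomes weak increase down the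
columns. The sign identity is `binom(-t - 1, k) = (-1)^k binom(t + k, k)`, after multiplying row
`i` by `(-1)^(a_i)` and column `j` by `(-1)^j`; for `p = -n` the only filling is zero.
-/

open Finset

namespace WeakTableaux

lemma count_le_count_add_sub {p : ℕ → Prop} [DecidablePred p] {c c' : ℕ} (h : c ≤ c') :
    Nat.count p c' ≤ Nat.count p c + (c' - c) := by
  obtain ⟨m, rfl⟩ := Nat.exists_eq_add_of_le h
  rw [Nat.count_add, Nat.add_sub_cancel_left]
  exact Nat.add_le_add_left (Nat.count_le _) _

lemma wellFounded_min_eq_of_forall_le {α : Type*} [LinearOrder α] [WellFoundedLT α]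
    {A B : Set α} (hA : A.Nonempty) (hB : B.Nonempty)
    (h : ∀ t ≤ wellFounded_lt.min A hA, t ∈ A ↔ t ∈ B) :
    wellFounded_lt.min B hB = wellFounded_lt.min A hA := by
  have hmin : wellFounded_lt.min A hA ∈ B := (h _ le_rfl).1 (WellFounded.min_mem _ _ _)
  refine le_antisymm (WellFounded.min_le _ hmin) (not_lt.1 fun hlt => ?_)
  exact WellFounded.not_lt_min _ A ((h _ hlt.le).2 (WellFounded.min_mem _ _ _)) hlt

lemma exists_inversion {n : ℕ} {σ : Equiv.Perm (Fin n)} (hσ : σ ≠ 1) :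
    ∃ j j', j < j' ∧ σ j' < σ j := by
  by_contra! h
  have hmono : Monotone σ := fun j j' hjj => hjj.eq_or_lt.elim (fun h => h ▸ le_rfl) (h j j')
  exact hσ (Equiv.ext fun i => congrFun (hmono.strictMono_of_injective σ.injective).eq_id i)

section FinsetCount

variable {S T : Finset ℕ} {c k : ℕ}

lemma count_eq_zero_of_le (hS : ∀ s ∈ S, c ≤ s) : Nat.count (· ∈ S) c = 0 :=
  Nat.count_iff_forall_not.2 fun s hs hsS => (hS s hsS).not_gt hs

lemma count_eq_card_of_lt (hS : ∀ s ∈ S, s < c) : Nat.count (· ∈ S) c = #S := by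
  rw [Nat.count_eq_card_filter_range, filter_mem_eq_inter, inter_eq_right.2]
  exact fun s hs => mem_range.2 (hS s hs)

lemma count_le_card (c : ℕ) : Nat.count (· ∈ S) c ≤ #S := by
  rw [Nat.count_eq_card_filter_range, filter_mem_eq_inter]
  exact card_le_card inter_subset_right

lemma nth_mem_of_lt_card (hk : k < #S) : Nat.nth (· ∈ S) k ∈ S :=
  Nat.nth_mem_of_lt_card S.finite_toSet (by simpa using hk)

lemma nth_lt_nth {k' : ℕ} (h : k < k') (hk' : k' < #S) :
    Nat.nth (· ∈ S) k < Nat.nth (· ∈ S) k' :=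
  Nat.nth_lt_nth_of_lt_card S.finite_toSet h (by simpa using hk')

lemma nth_eq_zero_of_card_le (hk : #S ≤ k) : Nat.nth (· ∈ S) k = 0 :=
  Nat.nth_of_card_le S.finite_toSet (by simpa using hk)

lemma count_nth (hk : k < #S) : Nat.count (· ∈ S) (Nat.nth (· ∈ S) k) = k :=
  Nat.count_nth_of_lt_card_finite S.finite_toSet (by simpa using hk)

lemma count_nth_add_one (hk : k < #S) :
    Nat.count (· ∈ S) (Nat.nth (· ∈ S) k + 1) = k + 1 := by
  rw [Nat.count_succ, count_nth hk, if_pos (nth_mem_of_lt_card hk)]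

lemma le_nth_iff_count_le (hk : k < #S) :
    c ≤ Nat.nth (· ∈ S) k ↔ Nat.count (· ∈ S) c ≤ k := by
  refine ⟨Nat.le_nth_of_count_le, fun h => ?_⟩
  by_contra! hlt
  have := Nat.count_monotone (· ∈ S) (Nat.succ_le_of_lt hlt)
  rw [count_nth_add_one hk] at this
  omega

lemma add_le_nth (hS : ∀ s ∈ S, c ≤ s) (hk : k < #S) : c + k ≤ Nat.nth (· ∈ S) k := by
  have hc : c ≤ Nat.nth (· ∈ S) k := hS _ (nth_mem_of_lt_card hk)
  have := count_le_count_add_sub (p := (· ∈ S)) hc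
  rw [count_nth hk, count_eq_zero_of_le hS] at this
  omega

lemma nth_add_card_le (hS : ∀ s ∈ S, s < c) (hk : k < #S) :
    Nat.nth (· ∈ S) k + #S ≤ c + k := by
  have hc : Nat.nth (· ∈ S) k + 1 ≤ c := hS _ (nth_mem_of_lt_card hk)
  have := count_le_count_add_sub (p := (· ∈ S)) hc
  rw [count_nth_add_one hk, count_eq_card_of_lt hS] at this
  omega

lemma image_nth_range : (range #S).image (Nat.nth (· ∈ S)) = S := by
  ext s
  simp only [mem_image, mem_range]
  refine ⟨fun ⟨k, hk, hs⟩ => hs ▸ nth_mem_of_lt_card hk, fun hs => ?_⟩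
  obtain ⟨k, hk, rfl⟩ := Nat.exists_lt_card_finite_nth_eq S.finite_toSet hs
  exact ⟨k, by simpa using hk, rfl⟩

lemma nth_image_range {L : ℕ} {g : ℕ → ℕ} (hg : StrictMonoOn g (Set.Iio L)) (hk : k < L) :
    Nat.nth (· ∈ (range L).image g) k = g k := by
  have hcount : Nat.count (· ∈ (range L).image g) (g k) = k := by
    have : {x ∈ range (g k) | x ∈ (range L).image g} = (range k).image g := by
      ext x
      simp only [mem_filter, mem_range, mem_image]
      constructor
      · rintro ⟨hx, k', hk', rfl⟩
        exact ⟨k', (hg.lt_iff_lt hk' hk).1 hx, rfl⟩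
      · rintro ⟨k', hk', rfl⟩
        exact ⟨(hg.lt_iff_lt (hk'.trans hk) hk).2 hk', k', hk'.trans hk, rfl⟩
    rw [Nat.count_eq_card_filter_range, this, card_image_of_injOn, card_range]
    exact hg.injOn.mono fun x hx => (mem_range.1 hx).trans hk
  rw [← hcount, Nat.nth_count (mem_image_of_mem g (mem_range.2 hk)), hcount]

lemma card_image_range {L : ℕ} {g : ℕ → ℕ} (hg : StrictMonoOn g (Set.Iio L)) :
    #((range L).image g) = L := by
  rw [card_image_of_injOn (by simpa using hg.injOn), card_range]

lemma count_le_count_iff (hST : #S ≤ #T) :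
    (∀ c, Nat.count (· ∈ S) c ≤ Nat.count (· ∈ T) c) ↔
      ∀ k < #S, Nat.nth (· ∈ T) k ≤ Nat.nth (· ∈ S) k := by
  constructor
  · intro h k hk
    have := h (Nat.nth (· ∈ S) k + 1)
    rw [count_nth_add_one hk] at this
    exact Nat.lt_succ_iff.1 (Nat.nth_lt_of_lt_count this)
  · intro h c
    by_contra! hlt
    set m := Nat.count (· ∈ T) c
    have hmS : m < #S := lt_of_lt_of_le hlt (count_le_card c)
    have h1 := (le_nth_iff_count_le (S := T) (c := c) (by omega)).2 le_rfl
    have h2 := (le_nth_iff_count_le (S := S) hmS).1 (h1.trans (h m hmS))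
    omega

/-- `S` is constant from `D` on and `S'` is empty below `x'`, so a strict inequality between
their counting functions survives clamping to `[x', D]`. -/
lemma exists_count_lt_of_count_lt {S S' : Finset ℕ} {x' D c : ℕ} (hS : ∀ s ∈ S, s < D)
    (hS' : ∀ s ∈ S', x' ≤ s) (hxD : x' ≤ D)
    (h : Nat.count (· ∈ S') c < Nat.count (· ∈ S) c) :
    ∃ c', x' ≤ c' ∧ c' ≤ D ∧ Nat.count (· ∈ S') c' < Nat.count (· ∈ S) c' := by
  have hclamp : Nat.count (· ∈ S) c ≤ Nat.count (· ∈ S) (min c D) := by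
    rcases le_total c D with hcD | hDc
    · rw [min_eq_left hcD]
    · rw [min_eq_right hDc, count_eq_card_of_lt hS]
      exact count_le_card c
  refine ⟨max x' (min c D), le_max_left _ _, max_le hxD (min_le_right _ _), ?_⟩
  have h₁ := Nat.count_monotone (· ∈ S) (le_max_right x' (min c D))
  have h₂ := Nat.count_monotone (· ∈ S') (min_le_left c D)
  rcases le_total (min c D) x' with hx | hx
  · rw [max_eq_left hx] at h₁ ⊢
    rw [count_eq_zero_of_le hS']
    omega
  · rw [max_eq_right hx] at h₁ ⊢
    omega

end FinsetCount

/-- A lattice path on the diagonals `c = 0, 1, …` is encoded by its initial height `x₀` and the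
set `S` of diagonals on which it steps up. -/
def height (x₀ : ℕ) (S : Finset ℕ) (c : ℕ) : ℕ := x₀ + Nat.count (· ∈ S) c

section Height

variable {x₀ x₀' : ℕ} {S S' : Finset ℕ}

lemma height_mono (x₀ : ℕ) (S : Finset ℕ) : Monotone (height x₀ S) :=
  fun _ _ h => Nat.add_le_add_left (Nat.count_monotone _ h) _

lemma height_succ_le (c : ℕ) : height x₀ S (c + 1) ≤ height x₀ S c + 1 := by
  simp only [height, Nat.count_succ]
  split_ifs <;> omega

/-- Discrete intermediate value theorem: heights grow by at most one per diagonal. -/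
lemma exists_height_eq {c₁ c₂ : ℕ} (h : c₁ ≤ c₂)
    (h₁ : height x₀ S c₁ ≤ height x₀' S' c₁)
    (h₂ : height x₀' S' c₂ ≤ height x₀ S c₂) :
    ∃ c, c₁ ≤ c ∧ c ≤ c₂ ∧ height x₀ S c = height x₀' S' c := by
  obtain ⟨k, rfl⟩ := Nat.exists_eq_add_of_le h
  induction k generalizing c₁ with
  | zero => exact ⟨c₁, le_rfl, le_rfl, le_antisymm h₁ h₂⟩
  | succ k ih =>
    by_cases hnext : height x₀ S (c₁ + 1) ≤ height x₀' S' (c₁ + 1)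
    · obtain ⟨c, hc₁, hc₂, hc⟩ :=
        ih (c₁ := c₁ + 1) (h := by omega) (h₁ := hnext) (h₂ := by rwa [add_right_comm])
      exact ⟨c, by omega, by omega, hc⟩
    · have := height_succ_le (x₀ := x₀) (S := S) c₁
      have := height_mono x₀' S' (Nat.le_add_right c₁ 1)
      exact ⟨c₁, le_rfl, by omega, by omega⟩

lemma height_le_height_of_le {x₀ x₀' : ℕ} {S S' : Finset ℕ} (hS : ∀ s ∈ S, x₀ ≤ s)
    (hS' : ∀ s ∈ S', x₀' ≤ s) (h : x₀ ≤ x₀') :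
    height x₀ S x₀' ≤ height x₀' S' x₀' := by
  have := count_le_count_add_sub (p := (· ∈ S)) h
  rw [count_eq_zero_of_le hS] at this
  rw [height, height, count_eq_zero_of_le hS']
  omega

def splice (S S' : Finset ℕ) (c : ℕ) : Finset ℕ := {s ∈ S | s < c} ∪ {s ∈ S' | c ≤ s}

lemma mem_splice {c s : ℕ} :
    s ∈ splice S S' c ↔ s < c ∧ s ∈ S ∨ c ≤ s ∧ s ∈ S' := by
  simp only [splice, mem_union, mem_filter]
  tauto

@[simp]
lemma splice_self (S : Finset ℕ) (c : ℕ) : splice S S c = S := by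
  ext s
  rw [mem_splice]
  by_cases s < c <;> grind

@[simp]
lemma splice_splice (S S' : Finset ℕ) (c : ℕ) :
    splice (splice S S' c) (splice S' S c) c = S := by
  ext s
  simp only [mem_splice]
  by_cases s < c <;> grind

lemma height_splice_of_le {c d : ℕ} (h : d ≤ c) :
    height x₀ (splice S S' c) d = height x₀ S d := by
  simp only [height, Nat.count_eq_card_filter_range]
  congr 2
  refine filter_congr fun s hs => ?_
  have := (mem_range.1 hs).trans_le h
  rw [mem_splice]
  grind

lemma height_splice_of_ge {c d : ℕ} (h : c ≤ d) (hc : height x₀ S c = height x₀' S' c) :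
    height x₀ (splice S S' c) d = height x₀' S' d := by
  obtain ⟨m, rfl⟩ := Nat.exists_eq_add_of_le h
  have hshift :
      Nat.count (fun k => c + k ∈ splice S S' c) m = Nat.count (fun k => c + k ∈ S') m := by
    simp [mem_splice]
  have hbelow := height_splice_of_le (x₀ := x₀) (S := S) (S' := S') (le_refl c)
  simp only [height, Nat.count_add] at hc hbelow ⊢
  omega

end Height

section Paths

variable {n : ℕ} (q : ℕ) (a : Fin n → ℕ)

/-- The diagonal on which a path ends at the sink of index `i`, at height `a i`. -/
def endDiag (i : Fin n) : ℕ := q + a i - (i + 1)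

/-- Lattice paths from the source `j` (height `j + 1` on diagonal `j + 1`) to the sink `i`,
each encoded by the set of diagonals on which it steps up. -/
def paths (j i : Fin n) : Finset (Finset ℕ) :=
  if (j : ℕ) + 1 ≤ a i then (Ico ((j : ℕ) + 1) (endDiag q a i)).powersetCard (a i - (j + 1))
  else ∅

def families (σ : Equiv.Perm (Fin n)) : Finset (Fin n → Finset ℕ) :=
  Fintype.piFinset fun j => paths q a j (σ j)

variable {q a}

lemma mem_paths {j i : Fin n} {S : Finset ℕ} :
    S ∈ paths q a j i ↔
      S ⊆ Ico ((j : ℕ) + 1) (endDiag q a i) ∧ (j : ℕ) + 1 + #S = a i := by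
  unfold paths
  split_ifs with h
  · rw [mem_powersetCard, and_congr_right_iff]
    omega
  · simp only [notMem_empty, false_iff, not_and]
    omega

lemma card_paths (j i : Fin n) :
    #(paths q a j i) =
      if (j : ℕ) + 1 ≤ a i then (q + a i - (i + 1) - (j + 1)).choose (a i - (j + 1))
      else 0 := by
  unfold paths
  split_ifs
  · rw [card_powersetCard, Nat.card_Ico, endDiag]
  · rfl

lemma mem_families {σ : Equiv.Perm (Fin n)} {F : Fin n → Finset ℕ} :
    F ∈ families q a σ ↔ ∀ j, F j ∈ paths q a j (σ j) :=
  Fintype.mem_piFinset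

lemma monotone_sub_val (ha : StrictMono a) : Monotone fun i : Fin n => a i - i := by
  rw [monotone_iff_forall_covBy]
  intro i i' hii
  have := ha hii.lt
  rw [Fin.covBy_iff, Nat.covBy_iff_add_one_eq] at hii
  omega

lemma val_add_one_le (ha : StrictMono a) (h1 : ∀ i, 1 ≤ a i) (i : Fin n) :
    (i : ℕ) + 1 ≤ a i := by
  have := i.2
  have : a ⟨0, by omega⟩ - 0 ≤ a i - i := monotone_sub_val ha (Fin.le_def.2 (Nat.zero_le _))
  have := h1 ⟨0, by omega⟩
  omega

lemma le_endDiag (ha1 : ∀ i : Fin n, (i : ℕ) + 1 ≤ a i) (i : Fin n) :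
    q ≤ endDiag q a i := by
  have := ha1 i
  unfold endDiag
  omega

lemma endDiag_mono (ha : StrictMono a) (ha1 : ∀ i : Fin n, (i : ℕ) + 1 ≤ a i) :
    Monotone (endDiag q a) := by
  intro i i' h
  have : a i - i ≤ a i' - i' := monotone_sub_val ha h
  have := ha1 i
  have := ha1 i'
  simp only [endDiag]
  omega

end Paths

section Switch

variable {n q : ℕ} {a : Fin n → ℕ} {σ : Equiv.Perm (Fin n)} {F : Fin n → Finset ℕ}

variable (q a) in
/-- Both paths must still be running on diagonal `c`: equal heights after one of them has
reached its sink do not count as a meeting. -/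
structure Meet (σ : Equiv.Perm (Fin n)) (F : Fin n → Finset ℕ) (c : ℕ) (j j' : Fin n) :
    Prop where
  ne : j ≠ j'
  start_le : (j : ℕ) + 1 ≤ c
  start_le' : (j' : ℕ) + 1 ≤ c
  le_end : c ≤ endDiag q a (σ j)
  le_end' : c ≤ endDiag q a (σ j')
  height_eq : height (j + 1) (F j) c = height (j' + 1) (F j') c

variable (q a) in
def meets (σ : Equiv.Perm (Fin n)) (F : Fin n → Finset ℕ) :
    Set (ℕ ×ₗ Fin n ×ₗ Fin n) :=
  {t | Meet q a σ F (ofLex t).1 (ofLex (ofLex t).2).1 (ofLex (ofLex t).2).2}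

lemma toLex_mem_meets {c : ℕ} {j j' : Fin n} :
    toLex (c, toLex (j, j')) ∈ meets q a σ F ↔ Meet q a σ F c j j' :=
  Iff.rfl

variable (q a) in
def Intersecting (σ : Equiv.Perm (Fin n)) (F : Fin n → Finset ℕ) : Prop :=
  (meets q a σ F).Nonempty

noncomputable def firstMeet (h : Intersecting q a σ F) : ℕ ×ₗ Fin n ×ₗ Fin n :=
  wellFounded_lt.min _ h

/-- Paths other than `j` and `j'` are unchanged, as `splice S S c = S`. -/
def switchTails (F : Fin n → Finset ℕ) (c : ℕ) (j j' : Fin n) : Fin n → Finset ℕ :=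
  fun k => splice (F k) (F (Equiv.swap j j' k)) c

lemma switchTails_switchTails (F : Fin n → Finset ℕ) (c : ℕ) (j j' : Fin n) :
    switchTails (switchTails F c j j') c j j' = F := by
  funext k
  simp [switchTails]

lemma splice_mem_paths {j i j' i' : Fin n} {S S' : Finset ℕ} {c : ℕ}
    (hS : S ∈ paths q a j i) (hS' : S' ∈ paths q a j' i') (hc : (j : ℕ) + 1 ≤ c)
    (hc' : c ≤ endDiag q a i') (h : height (j + 1) S c = height (j' + 1) S' c) :
    splice S S' c ∈ paths q a j i' := by
  rw [mem_paths] at hS hS' ⊢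
  have hsub : splice S S' c ⊆ Ico ((j : ℕ) + 1) (endDiag q a i') := by
    intro s hs
    have := @hS.1 s
    have := @hS'.1 s
    simp only [mem_splice, mem_Ico] at hs this ⊢
    grind
  refine ⟨hsub, ?_⟩
  have hend := height_splice_of_ge (d := endDiag q a i') hc' h
  rw [height, height, count_eq_card_of_lt (fun s hs => (mem_Ico.1 (hsub hs)).2),
    count_eq_card_of_lt (fun s hs => (mem_Ico.1 (hS'.1 hs)).2)] at hend
  omega

lemma switchTails_mem_families {c : ℕ} {j j' : Fin n} (hF : F ∈ families q a σ)
    (hm : Meet q a σ F c j j') :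
    switchTails F c j j' ∈ families q a (σ * Equiv.swap j j') := by
  rw [mem_families] at hF ⊢
  intro k
  simp only [switchTails, Equiv.Perm.mul_apply]
  rcases eq_or_ne k j with rfl | hkj
  · rw [Equiv.swap_apply_left]
    exact splice_mem_paths (hF k) (hF j') hm.start_le hm.le_end' hm.height_eq
  rcases eq_or_ne k j' with rfl | hkj'
  · rw [Equiv.swap_apply_right]
    exact splice_mem_paths (hF k) (hF j) hm.start_le' hm.le_end hm.height_eq.symm
  rw [Equiv.swap_apply_of_ne_of_ne hkj hkj', splice_self]
  exact hF k

lemma meet_switchTails_iff {c d : ℕ} {j j' : Fin n} (hm : Meet q a σ F c j j') (hd : d ≤ c)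
    (k k' : Fin n) :
    Meet q a (σ * Equiv.swap j j') (switchTails F c j j') d k k' ↔ Meet q a σ F d k k' := by
  have hend : ∀ k, d ≤ endDiag q a (σ (Equiv.swap j j' k)) ↔ d ≤ endDiag q a (σ k) := by
    intro k
    rw [Equiv.swap_apply_def]
    have := hm.le_end
    have := hm.le_end'
    split_ifs <;> subst_vars <;> omega
  have hheight : ∀ k : Fin n,
      height (k + 1) (switchTails F c j j' k) d = height (k + 1) (F k) d :=
    fun k => height_splice_of_le hd
  constructor
  · rintro ⟨hne, h₁, h₁', he, he', heq⟩
    rw [Equiv.Perm.mul_apply, hend] at he he'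
    exact ⟨hne, h₁, h₁', he, he', by rwa [hheight, hheight] at heq⟩
  · rintro ⟨hne, h₁, h₁', he, he', heq⟩
    rw [← hend] at he he'
    exact ⟨hne, h₁, h₁', he, he', by rwa [hheight, hheight]⟩

end Switch

section Involution

variable {n q : ℕ} {a : Fin n → ℕ} {σ : Equiv.Perm (Fin n)} {F : Fin n → Finset ℕ}

lemma meet_of_firstMeet_eq (h : Intersecting q a σ F) {c : ℕ} {j j' : Fin n}
    (ht : firstMeet h = toLex (c, toLex (j, j'))) : Meet q a σ F c j j' := by
  have := WellFounded.min_mem wellFounded_lt _ h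
  rwa [← firstMeet, ht] at this

lemma firstMeet_switchTails (h : Intersecting q a σ F) {c : ℕ} {j j' : Fin n}
    (ht : firstMeet h = toLex (c, toLex (j, j'))) :
    ∃ h' : Intersecting q a (σ * Equiv.swap j j') (switchTails F c j j'),
      firstMeet h' = toLex (c, toLex (j, j')) := by
  have hm := meet_of_firstMeet_eq h ht
  refine ⟨⟨_, toLex_mem_meets.2 ((meet_switchTails_iff hm le_rfl j j').2 hm)⟩, ?_⟩
  refine (wellFounded_min_eq_of_forall_le h _ fun t ht' => ?_).trans ht
  replace ht' : t ≤ toLex (c, toLex (j, j')) := ht ▸ ht'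
  exact (meet_switchTails_iff hm (Prod.Lex.monotone_fst _ _ ht') _ _).symm

variable (q a) in
/-- The sign-reversing involution of the Lindström–Gessel–Viennot argument. -/
noncomputable def switch (x : Σ _ : Equiv.Perm (Fin n), Fin n → Finset ℕ)
    (h : Intersecting q a x.1 x.2) : Σ _ : Equiv.Perm (Fin n), Fin n → Finset ℕ :=
  let t := ofLex (firstMeet h)
  ⟨x.1 * Equiv.swap (ofLex t.2).1 (ofLex t.2).2,
    switchTails x.2 t.1 (ofLex t.2).1 (ofLex t.2).2⟩

lemma sum_sign_intersecting_eq_zero (R : Type*) [CommRing R]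
    [∀ σ : Equiv.Perm (Fin n), DecidablePred (Intersecting q a σ)] :
    ∑ σ, ∑ _ ∈ (families q a σ).filter (Intersecting q a σ),
      ((Equiv.Perm.sign σ : ℤ) : R) = 0 := by
  rw [sum_sigma']
  refine sum_involution (fun x hx => switch q a x (mem_filter.1 (mem_sigma.1 hx).2).2) ?_ ?_ ?_ ?_
  all_goals
    rintro ⟨σ, F⟩ hx
    obtain ⟨hF, h⟩ := mem_filter.1 (mem_sigma.1 hx).2
    obtain ⟨c, j, j', ht⟩ : ∃ c j j', firstMeet h = toLex (c, toLex (j, j')) :=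
      ⟨_, _, _, rfl⟩
    have hjj := (meet_of_firstMeet_eq h ht).ne
    simp only [switch, ht, ofLex_toLex]
  · simp [Equiv.Perm.sign_mul, Equiv.Perm.sign_swap hjj]
  · intro _ heq
    have := congrArg Sigma.fst heq
    simp only [mul_eq_left, Equiv.swap_eq_one_iff] at this
    exact hjj this
  · obtain ⟨h', -⟩ := firstMeet_switchTails h ht
    exact mem_sigma.2 ⟨mem_univ _, mem_filter.2 ⟨switchTails_mem_families hF
      (meet_of_firstMeet_eq h ht), h'⟩⟩
  · obtain ⟨h', ht'⟩ := firstMeet_switchTails h ht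
    simp only [ht', ofLex_toLex, mul_assoc, Equiv.swap_mul_self, mul_one, switchTails_switchTails]

end Involution

section Crossing

variable {n q : ℕ} {a : Fin n → ℕ} {F : Fin n → Finset ℕ}

/-- Two inverted paths cross: the lower one starts below and ends above the higher one. -/
theorem intersecting_of_ne_one (ha : StrictMono a) (ha1 : ∀ i : Fin n, (i : ℕ) + 1 ≤ a i)
    (hq : n ≤ q) {σ : Equiv.Perm (Fin n)} (hσ : σ ≠ 1)
    (hF : F ∈ families q a σ) : Intersecting q a σ F := by
  obtain ⟨j, j', hjj, hσjj⟩ := exists_inversion hσ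
  obtain ⟨hj, hjcard⟩ := mem_paths.1 (mem_families.1 hF j)
  obtain ⟨hj', hj'card⟩ := mem_paths.1 (mem_families.1 hF j')
  set e := endDiag q a (σ j)
  set e' := endDiag q a (σ j')
  have h₁ : height (j + 1) (F j) (j' + 1) ≤ height (j' + 1) (F j') (j' + 1) :=
    height_le_height_of_le (fun s hs => (mem_Ico.1 (hj hs)).1)
      (fun s hs => (mem_Ico.1 (hj' hs)).1) (by simpa using hjj.le)
  have h₂ : height (j' + 1) (F j') (min e e') ≤ height (j + 1) (F j) (min e e') := by
    have := ha hσjj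
    have := count_le_count_add_sub (p := (· ∈ F j)) (min_le_left e e')
    have := count_le_card (S := F j') (min e e')
    have := count_eq_card_of_lt fun s hs => (mem_Ico.1 (hj hs)).2
    have : (σ j' : ℕ) < σ j := hσjj
    have := (σ j).2
    simp only [height, e, e', endDiag] at *
    omega
  have hjn := j'.2
  have hstart : (j' : ℕ) + 1 ≤ min e e' :=
    le_min (by have := le_endDiag (q := q) ha1 (σ j); omega)
      (by have := le_endDiag (q := q) ha1 (σ j'); omega)
  obtain ⟨d, hd₁, hd₂, hd⟩ := exists_height_eq hstart h₁ h₂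
  have : (j : ℕ) < j' := hjj
  refine ⟨toLex (d, toLex (j, j')), toLex_mem_meets.2 ?_⟩
  exact ⟨hjj.ne, by omega, hd₁, hd₂.trans (min_le_left _ _), hd₂.trans (min_le_right _ _),
    hd⟩

/-- Two neighbouring paths out of order on some diagonal cross between the start of the higher
one and the end of the lower one. -/
theorem not_intersecting_iff (ha : StrictMono a) (ha1 : ∀ i : Fin n, (i : ℕ) + 1 ≤ a i)
    (hq : n ≤ q) (hF : F ∈ families q a 1) :
    ¬Intersecting q a 1 F ↔ ∀ c, Monotone fun i => Nat.count (· ∈ F i) c := by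
  constructor
  · intro hF' c
    rw [monotone_iff_forall_covBy]
    intro i i' hii
    have hle := hii.le
    rw [Fin.covBy_iff, Nat.covBy_iff_add_one_eq] at hii
    by_contra! hlt
    have hi := (mem_paths.1 (mem_families.1 hF i)).1
    have hi' := (mem_paths.1 (mem_families.1 hF i')).1
    simp only [Equiv.Perm.one_apply] at hi hi'
    have hie : (i' : ℕ) + 1 ≤ endDiag q a i := by
      have := le_endDiag (q := q) ha1 i
      have := i'.2
      omega
    obtain ⟨c', hc'₁, hc'₂, hlt'⟩ := exists_count_lt_of_count_lt
      (fun s hs => (mem_Ico.1 (hi hs)).2) (fun s hs => (mem_Ico.1 (hi' hs)).1) hie hlt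
    have h₁ : height (i + 1) (F i) (i' + 1) ≤ height (i' + 1) (F i') (i' + 1) :=
      height_le_height_of_le (fun s hs => (mem_Ico.1 (hi hs)).1)
        (fun s hs => (mem_Ico.1 (hi' hs)).1) (by omega)
    have h₂ : height (i' + 1) (F i') c' ≤ height (i + 1) (F i) c' := by
      simp only [height]
      omega
    obtain ⟨d, hd₁, hd₂, hd⟩ := exists_height_eq hc'₁ h₁ h₂
    exact hF' ⟨toLex (d, toLex (i, i')), toLex_mem_meets.2 ⟨fun h => by omega, by omega, hd₁,
      hd₂.trans hc'₂, (hd₂.trans hc'₂).trans (endDiag_mono ha ha1 hle), hd⟩⟩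
  · rintro hmono ⟨⟨c, j, j'⟩, ht⟩
    have hlt : ∀ {j j' : Fin n}, j < j' → height (j + 1) (F j) c < height (j' + 1) (F j') c :=
      fun {j j'} h => by
        have : Nat.count (· ∈ F j) c ≤ Nat.count (· ∈ F j') c := hmono c h.le
        have : (j : ℕ) < j' := h
        simp only [height]
        omega
    have hm := toLex_mem_meets.1 ht
    rcases lt_or_gt_of_ne hm.ne with h | h
    · exact (hlt h).ne hm.height_eq
    · exact (hlt h).ne' hm.height_eq

end Crossing

section LindstromGesselViennot

variable {n q : ℕ} {a : Fin n → ℕ}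

theorem det_card_paths_eq_card_nonIntersecting (R : Type*) [CommRing R] (ha : StrictMono a)
    (ha1 : ∀ i : Fin n, (i : ℕ) + 1 ≤ a i) (hq : n ≤ q) :
    (Matrix.of fun i j : Fin n => (#(paths q a j i) : R)).det =
      Nat.card {F // F ∈ families q a 1 ∧ ¬Intersecting q a 1 F} := by
  classical
  have hterm : ∀ σ : Equiv.Perm (Fin n),
      ((Equiv.Perm.sign σ : ℤ) : R) * ∏ i, (#(paths q a i (σ i)) : R) =
        ∑ _ ∈ families q a σ, ((Equiv.Perm.sign σ : ℤ) : R) := by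
    intro σ
    rw [sum_const, nsmul_eq_mul, families, Fintype.card_piFinset, Nat.cast_prod, mul_comm]
  have hgood : ∑ σ, ∑ _ ∈ (families q a σ).filter (¬Intersecting q a σ ·),
      ((Equiv.Perm.sign σ : ℤ) : R) = #{F ∈ families q a 1 | ¬Intersecting q a 1 F} := by
    rw [sum_eq_single 1]
    · simp
    · intro σ _ hσ
      rw [filter_false_of_mem fun F hF => not_not.2 (intersecting_of_ne_one ha ha1 hq hσ hF),
        sum_empty]
    · simp
  calc _ = ∑ σ, ∑ _ ∈ families q a σ, ((Equiv.Perm.sign σ : ℤ) : R) := by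
        simp only [Matrix.det_apply', Matrix.of_apply, hterm]
    _ = ∑ σ, ∑ _ ∈ (families q a σ).filter (Intersecting q a σ),
          ((Equiv.Perm.sign σ : ℤ) : R) +
        ∑ σ, ∑ _ ∈ (families q a σ).filter (¬Intersecting q a σ ·),
          ((Equiv.Perm.sign σ : ℤ) : R) := by
        rw [← sum_add_distrib]
        exact sum_congr rfl fun σ _ => (sum_filter_add_sum_filter_not _ _ _).symm
    _ = _ := by
        rw [sum_sign_intersecting_eq_zero, zero_add, hgood, ← Nat.card_eq_finsetCard,
          Nat.card_congr (Equiv.subtypeEquivRight fun _ => mem_filter)]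

end LindstromGesselViennot

section Fillings

variable {n : ℕ} {a : Fin n → ℕ}

variable (n a) in
def IsMonotoneFilling (m : ℕ) (f : ℕ × ℕ → ℕ) : Prop :=
  (∀ u, u ∉ cellsOf n a → f u = 0) ∧
  (∀ u ∈ cellsOf n a, f u ≤ m) ∧
  (∀ x y, (x, y) ∈ cellsOf n a → (x, y + 1) ∈ cellsOf n a → f (x, y) ≤ f (x, y + 1)) ∧
  (∀ x y, (x, y) ∈ cellsOf n a → (x + 1, y) ∈ cellsOf n a → f (x, y) ≤ f (x + 1, y))

lemma lt_of_mem_cellsOf {x y : ℕ} (h : (x, y) ∈ cellsOf n a) : x < n :=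
  mem_range.1 (mem_product.1 (mem_filter.1 h).1).1

lemma exists_row_eq {x : ℕ} (hx : x < n) : ∃ i : Fin n, n - 1 - (i : ℕ) = x :=
  ⟨⟨n - 1 - x, by omega⟩, by simp only; omega⟩

lemma mem_cellsOf_iff (h2 : ∀ i : Fin n, a i ≤ 2 * (i : ℕ) + 1) (i : Fin n) {y : ℕ} :
    (n - 1 - (i : ℕ), y) ∈ cellsOf n a ↔ y < a i - (i + 1) := by
  have hi := i.2
  have hrow : (⟨n - 1 - (n - 1 - (i : ℕ)), by omega⟩ : Fin n) = i :=
    Fin.ext (by simp only; omega)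
  have h2i := h2 i
  rw [cellsOf, mem_filter, mem_product, mem_range, mem_range, extSeq]
  simp only [dif_pos (show n - 1 - (n - 1 - (i : ℕ)) < n by omega), hrow]
  omega

variable (a) in
/-- Row `n - 1 - i` of a filling, made strictly increasing and shifted by `n`, as the up-steps
of path `i`. -/
def familyOf (f : ℕ × ℕ → ℕ) (i : Fin n) : Finset ℕ :=
  (range (a i - (i + 1))).image fun k => f (n - 1 - i, k) + n + k

noncomputable def fillingOf (F : Fin n → Finset ℕ) (u : ℕ × ℕ) : ℕ :=
  if h : u.1 < n then Nat.nth (· ∈ F ⟨n - 1 - u.1, by omega⟩) u.2 - n - u.2 else 0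

lemma fillingOf_apply (F : Fin n → Finset ℕ) (i : Fin n) (k : ℕ) :
    fillingOf F (n - 1 - i, k) = Nat.nth (· ∈ F i) k - n - k := by
  have hi := i.2
  have hrow : (⟨n - 1 - (n - 1 - (i : ℕ)), by omega⟩ : Fin n) = i :=
    Fin.ext (by simp only; omega)
  simp only [fillingOf, dif_pos (show n - 1 - (i : ℕ) < n by omega), hrow]

end Fillings

section Bijection

variable {n q k m : ℕ} {a : Fin n → ℕ} {F : Fin n → Finset ℕ} {f : ℕ × ℕ → ℕ}

lemma card_of_mem_families (hF : F ∈ families q a 1) (i : Fin n) : #(F i) = a i - (i + 1) := by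
  have := (mem_paths.1 (mem_families.1 hF i)).2
  rw [Equiv.Perm.one_apply] at this
  omega

lemma card_mono_of_mem_families (ha : StrictMono a) (hF : F ∈ families q a 1) :
    Monotone fun i => #(F i) := by
  intro i i' h
  have : a i - i ≤ a i' - i' := monotone_sub_val ha h
  simp only [card_of_mem_families hF]
  omega

lemma nth_anti_of_monotone_count (ha : StrictMono a) (hF : F ∈ families q a 1)
    (hmono : ∀ c, Monotone fun i => Nat.count (· ∈ F i) c) {i i' : Fin n} (h : i ≤ i')
    (hk : k < #(F i)) : Nat.nth (· ∈ F i') k ≤ Nat.nth (· ∈ F i) k :=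
  (count_le_count_iff (card_mono_of_mem_families ha hF h)).1 (fun c => hmono c h) k hk

/-- The top path starts on diagonal `n`, and the paths below it step up no earlier. -/
lemma add_le_nth_of_monotone_count (ha : StrictMono a) (hF : F ∈ families q a 1)
    (hmono : ∀ c, Monotone fun i => Nat.count (· ∈ F i) c) {i : Fin n} (hk : k < #(F i)) :
    n + k ≤ Nat.nth (· ∈ F i) k := by
  have hi := i.2
  set top : Fin n := ⟨n - 1, by omega⟩
  have hitop : i ≤ top := Fin.le_def.2 (by simp only [top]; omega)
  have htop : ∀ s ∈ F top, n ≤ s := fun s hs => by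
    have := (mem_Ico.1 ((mem_paths.1 (mem_families.1 hF top)).1 hs)).1
    simp only [top] at this
    omega
  exact (add_le_nth htop (hk.trans_le (card_mono_of_mem_families ha hF hitop))).trans
    (nth_anti_of_monotone_count ha hF hmono hitop hk)

lemma nth_le_add_of_mem_families (hF : F ∈ families q a 1) {i : Fin n} (hk : k < #(F i)) :
    Nat.nth (· ∈ F i) k ≤ q + k := by
  have hlt : ∀ s ∈ F i, s < endDiag q a i := fun s hs =>
    (mem_Ico.1 ((mem_paths.1 (mem_families.1 hF i)).1 hs)).2
  have := nth_add_card_le hlt hk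
  have := card_of_mem_families hF i
  simp only [endDiag] at *
  omega

theorem isMonotoneFilling_fillingOf (ha : StrictMono a)
    (h2 : ∀ i : Fin n, a i ≤ 2 * (i : ℕ) + 1)
    (hF : F ∈ families q a 1) (hmono : ∀ c, Monotone fun i => Nat.count (· ∈ F i) c) :
    IsMonotoneFilling n a (q - n) (fillingOf F) := by
  have hrow : ∀ (i : Fin n) y, (n - 1 - (i : ℕ), y) ∈ cellsOf n a ↔ y < #(F i) :=
    fun i y => by
      rw [mem_cellsOf_iff h2, card_of_mem_families hF]
  refine ⟨?_, ?_, ?_, ?_⟩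
  · rintro ⟨x, y⟩ hu
    by_cases hx : x < n
    · obtain ⟨i, rfl⟩ := exists_row_eq hx
      rw [hrow, not_lt] at hu
      rw [fillingOf_apply, nth_eq_zero_of_card_le hu, Nat.zero_sub, Nat.zero_sub]
    · exact dif_neg hx
  · rintro ⟨x, y⟩ hu
    obtain ⟨i, rfl⟩ := exists_row_eq (lt_of_mem_cellsOf hu)
    have := nth_le_add_of_mem_families hF ((hrow i y).1 hu)
    rw [fillingOf_apply]
    omega
  · intro x y hu hu'
    obtain ⟨i, rfl⟩ := exists_row_eq (lt_of_mem_cellsOf hu)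
    have := nth_lt_nth (Nat.lt_add_one y) ((hrow i _).1 hu')
    have := add_le_nth_of_monotone_count ha hF hmono ((hrow i y).1 hu)
    rw [fillingOf_apply, fillingOf_apply]
    omega
  · intro x y hu hu'
    obtain ⟨i', rfl⟩ := exists_row_eq (lt_of_mem_cellsOf hu)
    obtain ⟨i, hi⟩ := exists_row_eq (lt_of_mem_cellsOf hu')
    rw [← hi] at hu' ⊢
    have hii : i ≤ i' := Fin.le_def.2 (by have := i'.2; omega)
    have := nth_anti_of_monotone_count ha hF hmono hii ((hrow i y).1 hu')
    rw [fillingOf_apply, fillingOf_apply]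
    omega

lemma strictMonoOn_row (h2 : ∀ i : Fin n, a i ≤ 2 * (i : ℕ) + 1)
    (hf : IsMonotoneFilling n a m f) (i : Fin n) :
    StrictMonoOn (fun k => f (n - 1 - i, k) + n + k) (Set.Iio (a i - (i + 1))) := by
  refine strictMonoOn_of_lt_add_one Set.ordConnected_Iio fun k _ hk hk' => ?_
  have := hf.2.2.1 _ k ((mem_cellsOf_iff h2 i).2 hk) ((mem_cellsOf_iff h2 i).2 hk')
  omega

lemma card_familyOf (h2 : ∀ i : Fin n, a i ≤ 2 * (i : ℕ) + 1)
    (hf : IsMonotoneFilling n a m f) (i : Fin n) : #(familyOf a f i) = a i - (i + 1) :=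
  card_image_range (strictMonoOn_row h2 hf i)

lemma nth_familyOf (h2 : ∀ i : Fin n, a i ≤ 2 * (i : ℕ) + 1)
    (hf : IsMonotoneFilling n a m f) {i : Fin n} (hk : k < a i - (i + 1)) :
    Nat.nth (· ∈ familyOf a f i) k = f (n - 1 - i, k) + n + k :=
  nth_image_range (strictMonoOn_row h2 hf i) hk

theorem familyOf_mem_families (ha1 : ∀ i : Fin n, (i : ℕ) + 1 ≤ a i)
    (h2 : ∀ i : Fin n, a i ≤ 2 * (i : ℕ) + 1) (hq : n ≤ q)
    (hf : IsMonotoneFilling n a (q - n) f) : familyOf a f ∈ families q a 1 := by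
  refine mem_families.2 fun i => mem_paths.2 ⟨fun s hs => ?_, ?_⟩
  · obtain ⟨k, hk, rfl⟩ := mem_image.1 hs
    have hk := mem_range.1 hk
    have := hf.2.1 _ ((mem_cellsOf_iff h2 i).2 hk)
    have := i.2
    have := ha1 i
    rw [Equiv.Perm.one_apply, mem_Ico, endDiag]
    omega
  · have := ha1 i
    rw [card_familyOf h2 hf, Equiv.Perm.one_apply]
    omega

theorem monotone_count_familyOf (ha : StrictMono a) (h2 : ∀ i : Fin n, a i ≤ 2 * (i : ℕ) + 1)
    (hf : IsMonotoneFilling n a m f) (c : ℕ) :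
    Monotone fun i => Nat.count (· ∈ familyOf a f i) c := by
  rw [monotone_iff_forall_covBy]
  intro i i' hii
  have hlen : a i - (i + 1) ≤ a i' - (i' + 1) := by
    have : a i - i ≤ a i' - i' := monotone_sub_val ha hii.le
    omega
  rw [Fin.covBy_iff, Nat.covBy_iff_add_one_eq] at hii
  refine (count_le_count_iff (by rwa [card_familyOf h2 hf, card_familyOf h2 hf])).2
    (fun k hk => ?_) c
  rw [card_familyOf h2 hf] at hk
  rw [nth_familyOf h2 hf hk, nth_familyOf h2 hf (hk.trans_le hlen)]
  have hrow : n - 1 - (i : ℕ) = n - 1 - i' + 1 := by have := i'.2; omega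
  have := hf.2.2.2 _ k ((mem_cellsOf_iff h2 i').2 (hk.trans_le hlen))
    (hrow ▸ (mem_cellsOf_iff h2 i).2 hk)
  rw [← hrow] at this
  omega

lemma familyOf_fillingOf (ha : StrictMono a) (hF : F ∈ families q a 1)
    (hmono : ∀ c, Monotone fun i => Nat.count (· ∈ F i) c) : familyOf a (fillingOf F) = F := by
  funext i
  rw [familyOf, ← card_of_mem_families hF]
  conv_rhs => rw [← image_nth_range (S := F i)]
  refine image_congr fun k hk => ?_
  have := add_le_nth_of_monotone_count ha hF hmono (mem_range.1 hk)
  simp only [fillingOf_apply]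
  omega

lemma fillingOf_familyOf (h2 : ∀ i : Fin n, a i ≤ 2 * (i : ℕ) + 1)
    (hf : IsMonotoneFilling n a m f) : fillingOf (familyOf a f) = f := by
  funext ⟨x, y⟩
  by_cases hx : x < n
  · obtain ⟨i, rfl⟩ := exists_row_eq hx
    rw [fillingOf_apply]
    by_cases hy : y < a i - (i + 1)
    · rw [nth_familyOf h2 hf hy]
      omega
    · rw [nth_eq_zero_of_card_le (by rw [card_familyOf h2 hf]; omega),
        hf.1 _ fun hu => hy ((mem_cellsOf_iff h2 i).1 hu), Nat.zero_sub, Nat.zero_sub]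
  · rw [fillingOf, dif_neg hx, hf.1 _ fun hu => hx (lt_of_mem_cellsOf hu)]

theorem card_ordered_families_eq_card_fillings (ha : StrictMono a)
    (ha1 : ∀ i : Fin n, (i : ℕ) + 1 ≤ a i)
    (h2 : ∀ i : Fin n, a i ≤ 2 * (i : ℕ) + 1) (hq : n ≤ q) :
    Nat.card {F // F ∈ families q a 1 ∧ ∀ c, Monotone fun i => Nat.count (· ∈ F i) c} =
      Nat.card {f // IsMonotoneFilling n a (q - n) f} :=
  Nat.card_congr
    { toFun F := ⟨fillingOf F.1, isMonotoneFilling_fillingOf ha h2 F.2.1 F.2.2⟩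
      invFun f := ⟨familyOf a f.1, familyOf_mem_families ha1 h2 hq f.2,
        monotone_count_familyOf ha h2 f.2⟩
      left_inv F := Subtype.ext (familyOf_fillingOf ha F.2.1 F.2.2)
      right_inv f := Subtype.ext (fillingOf_familyOf h2 f.2) }

end Bijection

section Determinants

variable {n q : ℕ} {a : Fin n → ℕ}

theorem det_choose_eq_card_fillings (ha : StrictMono a) (ha1 : ∀ i : Fin n, (i : ℕ) + 1 ≤ a i)
    (h2 : ∀ i : Fin n, a i ≤ 2 * (i : ℕ) + 1) (hq : n ≤ q) :
    (Matrix.of fun i j : Fin n =>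
        if (j : ℕ) + 1 ≤ a i then
          ((q + a i - ((i : ℕ) + 1) - ((j : ℕ) + 1)).choose (a i - ((j : ℕ) + 1)) : ℚ)
        else 0).det =
      Nat.card {f // IsMonotoneFilling n a (q - n) f} := by
  have hpaths : (Matrix.of fun i j : Fin n =>
      if (j : ℕ) + 1 ≤ a i then
        ((q + a i - ((i : ℕ) + 1) - ((j : ℕ) + 1)).choose (a i - ((j : ℕ) + 1)) : ℚ)
      else 0) = Matrix.of fun i j : Fin n => (#(paths q a j i) : ℚ) := by
    ext i j
    rw [Matrix.of_apply, Matrix.of_apply, card_paths]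
    split_ifs <;> simp
  rw [hpaths, det_card_paths_eq_card_nonIntersecting ℚ ha ha1 hq,
    ← card_ordered_families_eq_card_fillings ha ha1 h2 hq,
    Nat.card_congr (Equiv.subtypeEquivRight fun F =>
      and_congr_right (not_intersecting_iff ha ha1 hq))]

lemma zchoose_neg_natCast_sub_one (t k : ℕ) :
    zchoose (-t - 1) k = (-1) ^ k * ((t + k).choose k : ℚ) := by
  have hprod : ∏ s ∈ range k, (((-t - 1 : ℤ) : ℚ) - s) =
      (-1) ^ k * ((t + 1).ascFactorial k : ℚ) := by
    rw [Nat.ascFactorial_eq_prod_range, Nat.cast_prod, ← card_range k, ← prod_const, card_range,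
      ← prod_mul_distrib]
    refine prod_congr rfl fun s _ => ?_
    push_cast
    ring
  rw [zchoose, hprod, Nat.ascFactorial_eq_factorial_mul_choose, Nat.cast_mul]
  field_simp

lemma zchoose_neg_add_eq {q i j m : ℕ} (hi : i < q) (hj : j ≤ m) :
    zchoose (-(q : ℤ) + i) (m - j) =
      (-1) ^ m * ((-1) ^ j * ((q + m - (i + 1) - j).choose (m - j) : ℚ)) := by
  obtain ⟨k, rfl⟩ := Nat.exists_eq_add_of_le hj
  rw [show -(q : ℤ) + i = -((q - (i + 1) : ℕ) : ℤ) - 1 by omega, zchoose_neg_natCast_sub_one,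
    Nat.add_sub_cancel_left, show q - (i + 1) + k = q + (j + k) - (i + 1) - j by omega]
  have hsq : ((-1 : ℚ) ^ j) * (-1) ^ j = 1 := by rw [← pow_add, Even.neg_one_pow ⟨_, rfl⟩]
  linear_combination (-(-1 : ℚ) ^ k * ((q + (j + k) - (i + 1) - j).choose k : ℚ)) * hsq

theorem neg_one_pow_mul_det_zchoose_eq_det_choose (ha1 : ∀ i : Fin n, (i : ℕ) + 1 ≤ a i)
    (hq : n ≤ q) :
    (-1 : ℚ) ^ (∑ i : Fin n, (a i - ((i : ℕ) + 1))) *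
      (Matrix.of fun i j : Fin n =>
        if (j : ℕ) + 1 ≤ a i then zchoose (-(q : ℤ) + (i : ℕ)) (a i - ((j : ℕ) + 1))
        else 0).det =
      (Matrix.of fun i j : Fin n =>
        if (j : ℕ) + 1 ≤ a i then
          ((q + a i - ((i : ℕ) + 1) - ((j : ℕ) + 1)).choose (a i - ((j : ℕ) + 1)) : ℚ)
        else 0).det := by
  set M := Matrix.of fun i j : Fin n =>
    if (j : ℕ) + 1 ≤ a i then
      ((q + a i - ((i : ℕ) + 1) - ((j : ℕ) + 1)).choose (a i - ((j : ℕ) + 1)) : ℚ)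
    else 0
  have hentries : (Matrix.of fun i j : Fin n =>
      if (j : ℕ) + 1 ≤ a i then zchoose (-(q : ℤ) + (i : ℕ)) (a i - ((j : ℕ) + 1))
      else 0) =
      Matrix.of fun i j => (-1) ^ a i *
        Matrix.of (fun i j : Fin n => (-1) ^ ((j : ℕ) + 1) * M i j) i j := by
    ext i j
    simp only [M, Matrix.of_apply]
    split_ifs with h
    · exact zchoose_neg_add_eq (by have := i.2; omega) h
    · simp
  have hexp : ∑ i : Fin n, (a i - ((i : ℕ) + 1)) + ∑ i, a i + ∑ j : Fin n, ((j : ℕ) + 1) =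
      2 * ∑ i, a i := by
    rw [add_right_comm, ← sum_add_distrib, sum_congr rfl fun i _ => Nat.sub_add_cancel (ha1 i)]
    ring
  rw [hentries, Matrix.det_mul_column, Matrix.det_mul_row, prod_pow_eq_pow_sum,
    prod_pow_eq_pow_sum, ← mul_assoc, ← mul_assoc, ← pow_add, ← pow_add, hexp, pow_mul,
    neg_one_sq, one_pow, one_mul]

lemma card_isMonotoneFilling_zero : Nat.card {f // IsMonotoneFilling n a 0 f} = 1 := by
  have hzero : ∀ f, IsMonotoneFilling n a 0 f → f = 0 := fun f hf => funext fun u => by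
    by_cases hu : u ∈ cellsOf n a
    · exact Nat.le_zero.1 (hf.2.1 u hu)
    · exact hf.1 u hu
  have : Unique {f // IsMonotoneFilling n a 0 f} :=
    { default := ⟨0, fun _ _ => rfl, fun _ _ => le_rfl, fun _ _ _ _ => le_rfl,
        fun _ _ _ _ => le_rfl⟩
      uniq := fun f => Subtype.ext (hzero f f.2) }
  exact Nat.card_unique

end Determinants

end WeakTableaux

open WeakTableaux in
/-- For `a₁ < ⋯ < aₙ` positive with `aᵢ ≤ 2i-1`, `d = ∑(aᵢ-i)`, and `p ≤ -n`:
`(-1)^d det(binom(p+i-1, aᵢ-j)) = det(binom(|p|+aᵢ-i-j, aᵢ-j))`, which counts the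
weakly increasing fillings of `Y(a)` with entries in `{0,…,|p|-n}`; in particular
for `p = -n` the first determinant equals `(-1)^d`. -/
theorem det_counts_weak_tableaux (n : ℕ) (a : Fin n → ℕ) (ha : StrictMono a)
    (h1 : ∀ i, 1 ≤ a i) (h2 : ∀ i : Fin n, a i ≤ 2 * (i : ℕ) + 1)
    (p : ℤ) (hp : p ≤ -(n : ℤ)) :
    (-1 : ℚ) ^ (∑ i : Fin n, (a i - ((i : ℕ) + 1))) *
      Matrix.det (Matrix.of fun i j : Fin n =>
        if (j : ℕ) + 1 ≤ a i then zchoose (p + (i : ℕ)) (a i - ((j : ℕ) + 1)) else 0) =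
      Matrix.det (Matrix.of fun i j : Fin n =>
        if (j : ℕ) + 1 ≤ a i then
          (((((-p).toNat + a i - ((i : ℕ) + 1)) - ((j : ℕ) + 1)).choose
            (a i - ((j : ℕ) + 1)) : ℕ) : ℚ)
        else 0) ∧
    Matrix.det (Matrix.of fun i j : Fin n =>
        if (j : ℕ) + 1 ≤ a i then
          (((((-p).toNat + a i - ((i : ℕ) + 1)) - ((j : ℕ) + 1)).choose
            (a i - ((j : ℕ) + 1)) : ℕ) : ℚ)
        else 0) =
      (Nat.card {f : ℕ × ℕ → ℕ //
        (∀ u, u ∉ cellsOf n a → f u = 0) ∧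
        (∀ u ∈ cellsOf n a, f u ≤ (-p).toNat - n) ∧
        (∀ x y, (x, y) ∈ cellsOf n a → (x, y + 1) ∈ cellsOf n a → f (x, y) ≤ f (x, y + 1)) ∧
        (∀ x y, (x, y) ∈ cellsOf n a → (x + 1, y) ∈ cellsOf n a → f (x, y) ≤ f (x + 1, y))} : ℚ) ∧
    (p = -(n : ℤ) →
      Matrix.det (Matrix.of fun i j : Fin n =>
        if (j : ℕ) + 1 ≤ a i then zchoose (p + (i : ℕ)) (a i - ((j : ℕ) + 1)) else 0) =
      (-1 : ℚ) ^ (∑ i : Fin n, (a i - ((i : ℕ) + 1)))) := by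
  obtain ⟨q, rfl⟩ : ∃ q : ℕ, p = -q := ⟨(-p).toNat, by omega⟩
  have hq : n ≤ q := by omega
  have ha1 := val_add_one_le ha h1
  simp only [neg_neg, Int.toNat_natCast]
  have hsign := neg_one_pow_mul_det_zchoose_eq_det_choose ha1 hq
  have hcount := det_choose_eq_card_fillings ha ha1 h2 hq
  refine ⟨hsign, hcount, fun hqn => ?_⟩
  rw [hcount, show q - n = 0 by omega, card_isMonotoneFilling_zero, Nat.cast_one] at hsign
  set d := ∑ i : Fin n, (a i - ((i : ℕ) + 1))
  calc _ = (-1 : ℚ) ^ d * ((-1) ^ d * _) := by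
        rw [← mul_assoc, ← pow_add, Even.neg_one_pow ⟨d, rfl⟩, one_mul]
    _ = (-1) ^ d := by rw [hsign, mul_one]
end

section
/- For n×n variables, the determinant det( binom(t+i-1, a_i-j) )_{1≤i,j≤n}, where a_1 < ... < a_n with a_i ≤ 2i-1, is a polynomial in t of degree d = Σ(a_i - i) with leading coefficient equal to det( 1/(a_i - j)! ) = 1/H_{Y(a)}. -/
/-- The hook length of the box `u` in the cell set `c`. -/
def hookLen (c : Finset (ℕ × ℕ)) (u : ℕ × ℕ) : ℕ :=
  (c.filter fun v => v.1 = u.1 ∧ u.2 ≤ v.2).card +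
  (c.filter fun v => v.2 = u.2 ∧ u.1 < v.1).card

/-- The product of all hook lengths of a cell set. -/
def hookProd (c : Finset (ℕ × ℕ)) : ℕ := ∏ u ∈ c, hookLen c u

/-! Each entry in row `i`, column `j` is zero or a polynomial of degree `aᵢ - j` with top
coefficient `1/(aᵢ - j)!`, so expanding over permutations, `D` has degree at most
`∑ aᵢ - ∑ j` and its coefficient in that degree is `det(1/(aᵢ - j)!)`. With `bᵢ = aᵢ - 1`, the
entry `1/(bᵢ - (j-1))!` is `bᵢ(bᵢ - 1)⋯(bᵢ - j + 2) / bᵢ!`, a monic polynomial of degree `j - 1`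
in `bᵢ` divided by `bᵢ!`; hence the determinant is the Vandermonde product `∏_{i<j} (bⱼ - bᵢ)`
divided by `∏ bᵢ!`. This is `1/H_{Y(a)}` (in particular nonzero, so the degree is exact) by the
hook length formula in Frobenius form: the hook lengths of the row of length `bᵢ - (i-1)`
together with the numbers `bᵢ - bₖ`, `k < i`, are exactly `1, …, bᵢ`. -/

open Finset Polynomial

theorem Polynomial.coeff_prod_sum_of_natDegree_le {R ι : Type*} [CommSemiring R] (s : Finset ι)
    (f : ι → R[X]) (d : ι → ℕ) (h : ∀ i ∈ s, (f i).natDegree ≤ d i) :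
    (∏ i ∈ s, f i).coeff (∑ i ∈ s, d i) = ∏ i ∈ s, (f i).coeff (d i) := by
  induction s using Finset.cons_induction with
  | empty => simp
  | cons a s ha ih =>
    have hs : ∀ i ∈ s, (f i).natDegree ≤ d i := fun i hi => h i (mem_cons_of_mem hi)
    rw [prod_cons, sum_cons, prod_cons, coeff_mul_add_eq_of_natDegree_le (h a (mem_cons_self a s))
      ((natDegree_prod_le _ _).trans (sum_le_sum hs)), ih hs]

theorem Polynomial.natDegree_le_and_coeff_C_mul_prod_X_add_C {R ι : Type*} [CommRing R] (x : R)
    (s : Finset ι) (f : ι → R) :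
    (C x * ∏ i ∈ s, (X + C (f i))).natDegree ≤ #s ∧
      (C x * ∏ i ∈ s, (X + C (f i))).coeff #s = x := by
  nontriviality R
  have hmonic : (∏ i ∈ s, (X + C (f i))).Monic :=
    monic_prod_of_monic _ _ fun i _ => monic_X_add_C _
  have hdeg : (∏ i ∈ s, (X + C (f i))).natDegree = #s := by
    simp [natDegree_prod_of_monic _ _ fun i _ => monic_X_add_C (f i)]
  refine ⟨(natDegree_C_mul_le _ _).trans hdeg.le, ?_⟩
  rw [coeff_C_mul, ← hdeg, hmonic.coeff_natDegree, mul_one]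

namespace Matrix

variable {R ι : Type*} [CommRing R] [Fintype ι] {P : Matrix ι ι R[X]} {r c : ι → ℕ}

theorem natDegree_prod_perm_le_and_coeff
    (hP : ∀ i j, P i j ≠ 0 → c j + (P i j).natDegree ≤ r i) (σ : Equiv.Perm ι) :
    (∏ j, P (σ j) j).natDegree ≤ ∑ i, r i - ∑ j, c j ∧
      (∏ j, P (σ j) j).coeff (∑ i, r i - ∑ j, c j) =
        ∏ j, (P (σ j) j).coeff (r (σ j) - c j) := by
  by_cases hσ : ∀ j, P (σ j) j ≠ 0
  · have hdeg : ∀ j ∈ univ, (P (σ j) j).natDegree ≤ r (σ j) - c j := fun j _ =>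
      Nat.le_sub_of_add_le' (hP _ _ (hσ j))
    have hsum : ∑ j, (r (σ j) - c j) = ∑ i, r i - ∑ j, c j := by
      rw [sum_tsub_distrib _ fun j _ => le_of_add_le_left (hP _ _ (hσ j)), Equiv.sum_comp σ r]
    rw [← hsum]
    exact ⟨(natDegree_prod_le _ _).trans (sum_le_sum hdeg),
      coeff_prod_sum_of_natDegree_le _ _ _ hdeg⟩
  · push Not at hσ
    obtain ⟨j, hj⟩ := hσ
    rw [prod_eq_zero (f := fun j => P (σ j) j) (mem_univ j) hj,
      prod_eq_zero (f := fun j => (P (σ j) j).coeff _) (mem_univ j) (by rw [hj, coeff_zero]),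
      natDegree_zero, coeff_zero]
    exact ⟨Nat.zero_le _, rfl⟩

theorem natDegree_det_le_of_weights [DecidableEq ι]
    (hP : ∀ i j, P i j ≠ 0 → c j + (P i j).natDegree ≤ r i) :
    P.det.natDegree ≤ ∑ i, r i - ∑ j, c j := by
  rw [det_apply']
  refine natDegree_sum_le_of_forall_le _ _ fun σ _ => natDegree_mul_le.trans ?_
  simpa using (natDegree_prod_perm_le_and_coeff hP σ).1

theorem coeff_det_of_weights [DecidableEq ι]
    (hP : ∀ i j, P i j ≠ 0 → c j + (P i j).natDegree ≤ r i) :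
    P.det.coeff (∑ i, r i - ∑ j, c j) = (of fun i j => (P i j).coeff (r i - c j)).det := by
  rw [det_apply', finsetSum_coeff, det_apply']
  refine sum_congr rfl fun σ _ => ?_
  rw [← C_eq_intCast, coeff_C_mul, (natDegree_prod_perm_le_and_coeff hP σ).2]
  rfl

end Matrix

theorem ite_one_div_factorial_sub_eq {K : Type*} [Field K] [CharZero K] (m j : ℕ) :
    (if j ≤ m then (1 : K) / (m - j).factorial else 0) = m.descFactorial j / m.factorial := by
  split_ifs with h
  · have hdesc : (m.descFactorial j : K) ≠ 0 := by exact_mod_cast (Nat.descFactorial_pos.2 h).ne'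
    rw [← Nat.factorial_mul_descFactorial h]
    push_cast
    field_simp
  · rw [Nat.descFactorial_eq_zero_iff_lt.2 (by omega), Nat.cast_zero, zero_div]

theorem Matrix.det_of_ite_one_div_factorial_sub {K : Type*} [Field K] [CharZero K] {n : ℕ}
    (b : Fin n → ℕ) :
    (of fun i j : Fin n => if (j : ℕ) ≤ b i then (1 : K) / (b i - j).factorial else 0).det =
      (∏ i, (1 : K) / (b i).factorial) * ∏ i, ∏ j ∈ Ioi i, ((b j : K) - b i) := by
  have hentries : (of fun i j : Fin n => if (j : ℕ) ≤ b i then (1 : K) / (b i - j).factorial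
      else 0) = of fun i j => 1 / ((b i).factorial : K) *
        (of fun i j : Fin n => (descPochhammer K j).eval (b i : K)) i j := by
    ext i j
    rw [of_apply, of_apply, of_apply, ite_one_div_factorial_sub_eq,
      descPochhammer_eval_eq_descFactorial, div_eq_inv_mul, one_div]
  rw [hentries, det_mul_column, ← det_eval_matrixOfPolynomials_eq_det_vandermonde _ _
    (descPochhammer_natDegree K ·) (monic_descPochhammer K ·), det_vandermonde]

theorem StrictMono.apply_add_sub_le {n : ℕ} {b : Fin n → ℕ} (hb : StrictMono b) {k k' : Fin n}
    (h : k ≤ k') : b k + (k' - k : ℕ) ≤ b k' := by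
  have := card_le_card_of_injOn b (s := Icc k k') (t := Icc (b k) (b k'))
    (fun x hx => by
      simp only [coe_Icc, Set.mem_Icc] at hx ⊢
      exact ⟨hb.monotone hx.1, hb.monotone hx.2⟩) hb.injective.injOn
  rw [Fin.card_Icc, Nat.card_Icc] at this
  omega

theorem StrictMono.val_le_apply {n : ℕ} {b : Fin n → ℕ} (hb : StrictMono b) (i : Fin n) :
    (i : ℕ) ≤ b i := by
  have : b ⟨0, i.pos⟩ + ((i : ℕ) - 0) ≤ b i := hb.apply_add_sub_le (Nat.zero_le _)
  omega

/-- The hook length of the cell in column `c` of row `i` of the diagram whose row `k`, counted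
from the bottom, has length `ℓ k`. -/
def rowHook {n : ℕ} (ℓ : Fin n → ℕ) (i : Fin n) (c : ℕ) : ℕ :=
  ℓ i - c + #{k ∈ Iio i | c < ℓ k}

theorem rowHook_strictAntiOn {n : ℕ} (ℓ : Fin n → ℕ) (i : Fin n) :
    StrictAntiOn (rowHook ℓ i) (Set.Iio (ℓ i)) := by
  intro c hc c' hc' hcc'
  have : #{k ∈ Iio i | c' < ℓ k} ≤ #{k ∈ Iio i | c < ℓ k} :=
    card_le_card (monotone_filter_right _ fun _ _ => hcc'.trans)
  simp only [Set.mem_Iio] at hc hc'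
  simp only [rowHook]
  omega

section HookLengthFormula

variable {n : ℕ} {b : Fin n → ℕ}

/-- If row `k` ends at or before column `c`, only the rows strictly between `k` and `i` can reach
column `c`, and the hook is shorter than `b i - b k`; otherwise all rows `k, …, i - 1` do, and it
is longer. -/
theorem rowHook_ne_sub (hb : StrictMono b) {i k : Fin n} (hk : k < i) (c : ℕ) :
    rowHook (fun k => b k - k) i c ≠ b i - b k := by
  have hki := hb.apply_add_sub_le hk.le
  simp only [rowHook]
  rcases le_or_gt (b k - k) c with hkc | hkc
  · have hleg : #{k' ∈ Iio i | c < b k' - k'} ≤ #(Ioo k i) := card_le_card fun k' hk' => by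
      simp only [mem_filter, mem_Iio, mem_Ioo] at hk' ⊢
      refine ⟨lt_of_not_ge fun hk'k => ?_, hk'.1⟩
      have := hb.apply_add_sub_le hk'k
      omega
    rw [Fin.card_Ioo] at hleg
    omega
  · have hleg : #(Ico k i) ≤ #{k' ∈ Iio i | c < b k' - k'} := card_le_card fun k' hk' => by
      simp only [mem_filter, mem_Iio, mem_Ico] at hk' ⊢
      have := hb.apply_add_sub_le hk'.1
      exact ⟨hk'.2, by omega⟩
    rw [Fin.card_Ico] at hleg
    omega

/-- The hook lengths of row `i` and the numbers `b i - b k`, `k < i`, are `1, …, b i`, each once. -/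
theorem prod_rowHook_mul_prod_sub_eq_factorial (hb : StrictMono b) (i : Fin n) :
    (∏ c ∈ range (b i - i), rowHook (fun k => b k - k) i c) * ∏ k ∈ Iio i, (b i - b k) =
      (b i).factorial := by
  set hooks := (range (b i - i)).image (rowHook (fun k => b k - k) i)
  set gaps := (Iio i).image fun k => b i - b k
  have hinj : Set.InjOn (rowHook (fun k => b k - k) i) (range (b i - i)) := by
    rw [coe_range]
    exact (rowHook_strictAntiOn _ i).injOn
  have hinj' : Set.InjOn (fun k => b i - b k) (Iio i) := fun k hk k' hk' h => by
    have := hb (mem_Iio.1 hk)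
    have := hb (mem_Iio.1 hk')
    exact hb.injective (by simp only at h; omega)
  have hdisj : Disjoint hooks gaps := by
    simp only [hooks, gaps, disjoint_left, mem_image, mem_Iio]
    rintro _ ⟨c, -, rfl⟩ ⟨k, hk, hck⟩
    exact rowHook_ne_sub hb hk c hck.symm
  have hunion : hooks ∪ gaps = Ico 1 (b i + 1) := by
    refine eq_of_subset_of_card_le (union_subset ?_ ?_) ?_
    · refine image_subset_iff.2 fun c hc => ?_
      have : #{k ∈ Iio i | c < b k - k} ≤ #(Iio i) := card_filter_le _ _
      rw [Fin.card_Iio] at this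
      rw [mem_range] at hc
      simp only [mem_Ico, rowHook]
      omega
    · refine image_subset_iff.2 fun k hk => ?_
      have := hb (mem_Iio.1 hk)
      rw [mem_Ico]
      omega
    · rw [card_union_of_disjoint hdisj, card_image_of_injOn hinj, card_image_of_injOn hinj',
        card_range, Fin.card_Iio, Nat.card_Ico]
      have := hb.val_le_apply i
      omega
  rw [← prod_Ico_id_eq_factorial, ← hunion, prod_union hdisj, prod_image hinj, prod_image hinj']

theorem prod_rowHook_mul_prod_sub_eq_prod_factorial (hb : StrictMono b) :
    (∏ i, ∏ c ∈ range (b i - i), rowHook (fun k => b k - k) i c) *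
      ∏ i, ∏ j ∈ Ioi i, (b j - b i) = ∏ i, (b i).factorial := by
  rw [prod_comm' (t' := univ) (s' := Iio) (by simp), ← prod_mul_distrib]
  exact prod_congr rfl fun i _ => prod_rowHook_mul_prod_sub_eq_factorial hb i

end HookLengthFormula

section Cells

variable {n : ℕ} {a : Fin n → ℕ}

theorem mem_cellsOf (h2 : ∀ i : Fin n, a i ≤ 2 * (i : ℕ) + 1) {u : ℕ × ℕ} :
    u ∈ cellsOf n a ↔ ∃ k : Fin n, u.1 = n - 1 - k ∧ u.2 < a k - 1 - k := by
  obtain ⟨r, c⟩ := u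
  rw [cellsOf, mem_filter, mem_product, mem_range, mem_range, extSeq]
  constructor
  · rintro ⟨⟨hr, -⟩, hc⟩
    refine ⟨⟨n - 1 - r, by omega⟩, by dsimp only; omega, ?_⟩
    rw [dif_pos (by omega)] at hc
    dsimp only at hc ⊢
    omega
  · rintro ⟨k, rfl, hc⟩
    have := h2 k
    have hk : n - 1 - (n - 1 - k) = k := by omega
    simp only [hk, Fin.eta, k.isLt, dif_pos]
    omega

theorem hookLen_cellsOf (h2 : ∀ i : Fin n, a i ≤ 2 * (i : ℕ) + 1) {k : Fin n} {c : ℕ}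
    (hc : c < a k - 1 - k) :
    hookLen (cellsOf n a) (n - 1 - k, c) = rowHook (fun k => a k - 1 - k) k c := by
  have hrow : ∀ k' : Fin n, n - 1 - (k' : ℕ) = n - 1 - k ↔ k' = k := fun k' => by
    rw [Fin.ext_iff]
    omega
  have harm : (cellsOf n a).filter (fun v => v.1 = n - 1 - k ∧ c ≤ v.2) =
      {n - 1 - (k : ℕ)} ×ˢ Ico c (a k - 1 - k) := by
    ext ⟨r, c'⟩
    simp only [mem_filter, mem_cellsOf h2, mem_product, mem_singleton, mem_Ico]
    constructor
    · rintro ⟨⟨k', rfl, hc'⟩, hk', hcc'⟩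
      obtain rfl := (hrow k').1 hk'
      exact ⟨rfl, hcc', hc'⟩
    · rintro ⟨rfl, hcc', hc'⟩
      exact ⟨⟨k, rfl, hc'⟩, rfl, hcc'⟩
  have hleg : (cellsOf n a).filter (fun v => v.2 = c ∧ n - 1 - k < v.1) =
      {k' ∈ Iio k | c < a k' - 1 - k'}.image fun k' : Fin n => (n - 1 - (k' : ℕ), c) := by
    ext ⟨r, c'⟩
    simp only [mem_filter, mem_cellsOf h2, mem_image, mem_Iio, Prod.mk.injEq]
    constructor
    · rintro ⟨⟨k', rfl, hc'⟩, rfl, hk'⟩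
      exact ⟨k', ⟨by rw [Fin.lt_def]; omega, hc'⟩, rfl, rfl⟩
    · rintro ⟨k', ⟨hk', hc'⟩, rfl, rfl⟩
      rw [Fin.lt_def] at hk'
      exact ⟨⟨k', rfl, hc'⟩, rfl, by omega⟩
  have hinj : Function.Injective fun k' : Fin n => (n - 1 - (k' : ℕ), c) := fun k₁ k₂ h => by
    simp only [Prod.mk.injEq] at h
    exact Fin.ext (by omega)
  rw [hookLen, rowHook, harm, hleg, card_image_of_injective _ hinj, card_product, card_singleton,
    Nat.card_Ico, one_mul]

theorem hookProd_cellsOf (h2 : ∀ i : Fin n, a i ≤ 2 * (i : ℕ) + 1) :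
    hookProd (cellsOf n a) =
      ∏ k, ∏ c ∈ range (a k - 1 - k), rowHook (fun k => a k - 1 - k) k c := by
  have hcells : cellsOf n a = (univ.sigma fun k : Fin n => range (a k - 1 - k)).image
      fun x => (n - 1 - (x.1 : ℕ), x.2) := by
    ext u
    simp only [mem_cellsOf h2, mem_image, mem_sigma, mem_univ, mem_range, true_and]
    constructor
    · rintro ⟨k, hk, hc⟩
      exact ⟨⟨k, u.2⟩, hc, by rw [← hk]⟩
    · rintro ⟨⟨k, c⟩, hc, rfl⟩
      exact ⟨k, rfl, hc⟩
  have hinj : Function.Injective fun x : (_ : Fin n) × ℕ => (n - 1 - (x.1 : ℕ), x.2) :=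
    fun x y h => by
      simp only [Prod.mk.injEq] at h
      exact Sigma.ext (Fin.ext (by omega)) (heq_of_eq h.2)
  rw [hookProd, hcells, prod_image hinj.injOn, prod_sigma, ← hcells]
  exact prod_congr rfl fun k _ => prod_congr rfl fun c hc => hookLen_cellsOf h2 (mem_range.1 hc)

theorem hookProd_cellsOf_mul_prod_sub_eq_prod_factorial (hb : StrictMono fun i => a i - 1)
    (h2 : ∀ i : Fin n, a i ≤ 2 * (i : ℕ) + 1) :
    hookProd (cellsOf n a) * ∏ i, ∏ j ∈ Ioi i, (a j - 1 - (a i - 1)) =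
      ∏ i, (a i - 1).factorial :=
  hookProd_cellsOf h2 ▸ prod_rowHook_mul_prod_sub_eq_prod_factorial hb

end Cells

theorem hookProd_pos (s : Finset (ℕ × ℕ)) : 0 < hookProd s :=
  prod_pos fun u hu => Nat.add_pos_left (card_pos.2 ⟨u, mem_filter.2 ⟨hu, rfl, le_rfl⟩⟩) _

section BinomialMatrix

variable {n : ℕ} (a : Fin n → ℕ)

noncomputable def binomialMatrix : Matrix (Fin n) (Fin n) ℚ[X] :=
  Matrix.of fun i j : Fin n =>
    if (j : ℕ) + 1 ≤ a i then
      C ((1 : ℚ) / ((a i - ((j : ℕ) + 1)).factorial : ℚ)) *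
        ∏ s ∈ range (a i - ((j : ℕ) + 1)), (X + C ((i : ℚ) - s))
    else 0

def invFactorialMatrix : Matrix (Fin n) (Fin n) ℚ :=
  Matrix.of fun i j : Fin n =>
    if (j : ℕ) + 1 ≤ a i then (1 : ℚ) / ((a i - ((j : ℕ) + 1)).factorial : ℚ) else 0

theorem natDegree_binomialMatrix_le_and_coeff (i j : Fin n) :
    (binomialMatrix a i j).natDegree ≤ a i - (j + 1) ∧
      (binomialMatrix a i j).coeff (a i - (j + 1)) = invFactorialMatrix a i j := by
  simp only [binomialMatrix, invFactorialMatrix, Matrix.of_apply]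
  split_ifs
  · simpa using natDegree_le_and_coeff_C_mul_prod_X_add_C _ (range (a i - (j + 1)))
      fun s => (i : ℚ) - s
  · simp

theorem binomialMatrix_weights (i j : Fin n) (h : binomialMatrix a i j ≠ 0) :
    ((j : ℕ) + 1) + (binomialMatrix a i j).natDegree ≤ a i := by
  have : (j : ℕ) + 1 ≤ a i := by
    by_contra hij
    exact h (by rw [binomialMatrix, Matrix.of_apply, if_neg hij])
  have := (natDegree_binomialMatrix_le_and_coeff a i j).1
  omega

variable {a}

theorem det_invFactorialMatrix
    (hb : StrictMono fun i => a i - 1) (h1 : ∀ i, 1 ≤ a i)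
    (h2 : ∀ i : Fin n, a i ≤ 2 * (i : ℕ) + 1) :
    (invFactorialMatrix a).det = 1 / hookProd (cellsOf n a) := by
  set b : Fin n → ℕ := fun i => a i - 1
  have hentries : invFactorialMatrix a =
      Matrix.of fun i j : Fin n =>
        if (j : ℕ) ≤ b i then (1 : ℚ) / (b i - j).factorial else 0 := by
    ext i j
    simp only [invFactorialMatrix, Matrix.of_apply, b, Nat.le_sub_iff_add_le (h1 i), Nat.sub_sub,
      add_comm 1 (j : ℕ)]
  have hhook : (hookProd (cellsOf n a) : ℚ) * ∏ i, ∏ j ∈ Ioi i, ((b j : ℚ) - b i) =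
      ∏ i, ((b i).factorial : ℚ) := by
    have hcast : ∏ i, ∏ j ∈ Ioi i, ((b j : ℚ) - b i) =
        ((∏ i, ∏ j ∈ Ioi i, (b j - b i) : ℕ) : ℚ) := by
      push_cast
      exact prod_congr rfl fun i _ => prod_congr rfl fun j hj =>
        (Nat.cast_sub (hb.monotone (mem_Ioi.1 hj).le)).symm
    rw [hcast]
    exact_mod_cast hookProd_cellsOf_mul_prod_sub_eq_prod_factorial hb h2
  rw [hentries, Matrix.det_of_ite_one_div_factorial_sub,
    eq_div_iff (by exact_mod_cast (hookProd_pos _).ne'), mul_assoc,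
    mul_comm _ (hookProd _ : ℚ), hhook, ← prod_mul_distrib]
  exact prod_eq_one fun i _ => one_div_mul_cancel (by positivity)

end BinomialMatrix

/-- The polynomial `det(binom(t+i-1, aᵢ-j))` has degree `d = ∑(aᵢ-i)` in `t`, with
leading coefficient `det(1/(aᵢ-j)!) = 1/H_{Y(a)}`. -/
theorem det_binomial_poly_degree_leadingCoeff (n : ℕ) (a : Fin n → ℕ) (ha : StrictMono a)
    (h1 : ∀ i, 1 ≤ a i) (h2 : ∀ i : Fin n, a i ≤ 2 * (i : ℕ) + 1) :
    let D : Polynomial ℚ := Matrix.det (Matrix.of fun i j : Fin n =>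
      if (j : ℕ) + 1 ≤ a i then
        Polynomial.C ((1 : ℚ) / ((a i - ((j : ℕ) + 1)).factorial : ℚ)) *
          ∏ s ∈ Finset.range (a i - ((j : ℕ) + 1)),
            (Polynomial.X + Polynomial.C ((i : ℚ) - s))
      else 0)
    D.natDegree = ∑ i : Fin n, (a i - ((i : ℕ) + 1)) ∧
    D.leadingCoeff = Matrix.det (Matrix.of fun i j : Fin n =>
      if (j : ℕ) + 1 ≤ a i then (1 : ℚ) / ((a i - ((j : ℕ) + 1)).factorial : ℚ) else 0) ∧
    Matrix.det (Matrix.of fun i j : Fin n =>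
      if (j : ℕ) + 1 ≤ a i then (1 : ℚ) / ((a i - ((j : ℕ) + 1)).factorial : ℚ) else 0) =
      (1 : ℚ) / hookProd (cellsOf n a) := by
  intro D
  have hb : StrictMono fun i => a i - 1 := fun i j hij => Nat.sub_lt_sub_right (h1 i) (ha hij)
  have hsum : ∑ i, a i - ∑ j : Fin n, ((j : ℕ) + 1) = ∑ i : Fin n, (a i - ((i : ℕ) + 1)) :=
    (sum_tsub_distrib _ fun i _ => by have := hb.val_le_apply i; have := h1 i; omega).symm
  have hcoeff : D.coeff (∑ i, a i - ∑ j : Fin n, ((j : ℕ) + 1)) = (invFactorialMatrix a).det := by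
    rw [← Matrix.ext fun i j => (natDegree_binomialMatrix_le_and_coeff a i j).2]
    exact Matrix.coeff_det_of_weights (binomialMatrix_weights a)
  have hdetL := det_invFactorialMatrix hb h1 h2
  have hdeg : D.natDegree = ∑ i : Fin n, (a i - ((i : ℕ) + 1)) := by
    refine hsum ▸ natDegree_eq_of_le_of_coeff_ne_zero
      (Matrix.natDegree_det_le_of_weights (binomialMatrix_weights a)) ?_
    rw [hcoeff, hdetL]
    exact one_div_ne_zero (by exact_mod_cast (hookProd_pos _).ne')
  refine ⟨hdeg, ?_, hdetL⟩
  rw [leadingCoeff, hdeg, ← hsum, hcoeff]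
  rfl
end

section
/- Conjugation of matchings corresponds to transposition of Young diagrams: if π* is defined by ({i,j} ∈ π* iff {2n+1-j, 2n+1-i} ∈ π), then Y(π*) is the transpose (conjugate partition) of Y(π). Consequently d(π*) = d(π) and m_p^{(A)}(π*) = m_p^{(A)}(π) for all p. -/
/-- A noncrossing perfect matching of `{1,…,2n}`, given as a finset of pairs `(a,b)`
with `a < b`. -/
def IsMatching (n : ℕ) (M : Finset (ℕ × ℕ)) : Prop :=
  (∀ q ∈ M, 1 ≤ q.1 ∧ q.1 < q.2 ∧ q.2 ≤ 2 * n) ∧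
  (∀ x, 1 ≤ x → x ≤ 2 * n → ∃! q, q ∈ M ∧ (q.1 = x ∨ q.2 = x)) ∧
  (∀ q ∈ M, ∀ r ∈ M, ¬(q.1 < r.1 ∧ r.1 < q.2 ∧ q.2 < r.2))

/-- Rule A multiplicity: half the number of arches separating `{1,…,p} ∪ {2n+1-p,…,2n}`
from the middle part. -/
def mA (n : ℕ) (M : Finset (ℕ × ℕ)) (p : ℕ) : ℕ :=
  ((M.filter fun q => q.1 ≤ p ∧ p < q.2 ∧ q.2 < 2 * n + 1 - p).card +
   (M.filter fun q => p < q.1 ∧ q.1 < 2 * n + 1 - p ∧ 2 * n + 1 - p ≤ q.2).card) / 2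

/-- The Young diagram `Y(π)` of the matching `M`, with 1-indexed boxes `(x,y)`. -/
def cellsM (n : ℕ) (M : Finset (ℕ × ℕ)) : Finset (ℕ × ℕ) :=
  ((Finset.Icc 1 n) ×ˢ (Finset.Icc 1 n)).filter fun u =>
    ((M.image Prod.fst).filter fun t => t ≤ n - u.1 + u.2).card ≤ n - u.1

/-- The conjugate matching `π*`: `{i,j} ∈ π*` iff `{2n+1-j, 2n+1-i} ∈ π`. -/
def conjM (n : ℕ) (M : Finset (ℕ × ℕ)) : Finset (ℕ × ℕ) :=
  M.image fun q => (2 * n + 1 - q.2, 2 * n + 1 - q.1)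

section Aux

variable {n : ℕ} {M : Finset (ℕ × ℕ)}

lemma inj_fst (hM : IsMatching n M) : Set.InjOn (Prod.fst : ℕ × ℕ → ℕ) ↑M := by
  intro q hq r hr h
  obtain ⟨hq1, hq12, hq2⟩ := hM.1 q hq
  obtain ⟨_, _, _⟩ := hM.1 r hr
  obtain ⟨u, _, hu⟩ := hM.2.1 q.1 hq1 (by omega)
  have e1 := hu q ⟨hq, Or.inl rfl⟩
  have e2 := hu r ⟨hr, Or.inl h.symm⟩
  rw [e1, ← e2]

lemma inj_snd (hM : IsMatching n M) : Set.InjOn (Prod.snd : ℕ × ℕ → ℕ) ↑M := by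
  intro q hq r hr h
  obtain ⟨hq1, hq12, hq2⟩ := hM.1 q hq
  obtain ⟨_, _, _⟩ := hM.1 r hr
  obtain ⟨u, _, hu⟩ := hM.2.1 q.2 (by omega) hq2
  have e1 := hu q ⟨hq, Or.inr rfl⟩
  have e2 := hu r ⟨hr, Or.inr h.symm⟩
  rw [e1, ← e2]

lemma disj_OC (hM : IsMatching n M) :
    Disjoint (M.image Prod.fst) (M.image Prod.snd) := by
  rw [Finset.disjoint_left]
  rintro t ht hc
  simp only [Finset.mem_image] at ht hc
  obtain ⟨q, hq, hqt⟩ := ht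
  obtain ⟨r, hr, hrt⟩ := hc
  obtain ⟨hq1, hq12, hq2⟩ := hM.1 q hq
  obtain ⟨hr1, hr12, hr2⟩ := hM.1 r hr
  obtain ⟨u, _, hu⟩ := hM.2.1 t (by omega) (by omega)
  have e1 := hu q ⟨hq, Or.inl hqt⟩
  have e2 := hu r ⟨hr, Or.inr hrt⟩
  have hqr : q = r := e1.trans e2.symm
  rw [hqr] at hqt
  omega

lemma union_OC (hM : IsMatching n M) :
    M.image Prod.fst ∪ M.image Prod.snd = Finset.Icc 1 (2 * n) := by
  apply Finset.Subset.antisymm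
  · intro t ht
    simp only [Finset.mem_union, Finset.mem_image] at ht
    rcases ht with ⟨q, hq, rfl⟩ | ⟨q, hq, rfl⟩ <;>
      · obtain ⟨h1, h2, h3⟩ := hM.1 q hq
        simp only [Finset.mem_Icc]; omega
  · intro t ht
    simp only [Finset.mem_Icc] at ht
    obtain ⟨q, ⟨hq, hq'⟩, _⟩ := hM.2.1 t ht.1 ht.2
    simp only [Finset.mem_union, Finset.mem_image]
    rcases hq' with h | h
    · exact Or.inl ⟨q, hq, h⟩
    · exact Or.inr ⟨q, hq, h⟩

lemma card_O (hM : IsMatching n M) : (M.image Prod.fst).card = n := by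
  have h1 : (M.image Prod.fst).card = M.card := Finset.card_image_of_injOn (inj_fst hM)
  have h2 : (M.image Prod.snd).card = M.card := Finset.card_image_of_injOn (inj_snd hM)
  have h3 : (M.image Prod.fst ∪ M.image Prod.snd).card
      = (M.image Prod.fst).card + (M.image Prod.snd).card :=
    Finset.card_union_of_disjoint (disj_OC hM)
  rw [union_OC hM] at h3
  simp only [Nat.card_Icc] at h3
  omega

lemma card_C (hM : IsMatching n M) : (M.image Prod.snd).card = n := by
  have h1 : (M.image Prod.fst).card = M.card := Finset.card_image_of_injOn (inj_fst hM)
  have h2 : (M.image Prod.snd).card = M.card := Finset.card_image_of_injOn (inj_snd hM)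
  rw [h2, ← h1, card_O hM]

/-- Counting lemma: among `1,…,m` there are exactly `m` points, each an opener or closer. -/
lemma key_count (hM : IsMatching n M) (m : ℕ) (hm : m ≤ 2 * n) :
    ((M.image Prod.fst).filter fun t => t ≤ m).card
      + ((M.image Prod.snd).filter fun t => t ≤ m).card = m := by
  have hdisj : Disjoint ((M.image Prod.fst).filter fun t => t ≤ m)
      ((M.image Prod.snd).filter fun t => t ≤ m) :=
    Finset.disjoint_filter_filter (disj_OC hM)
  have hcard := Finset.card_union_of_disjoint hdisj
  rw [← Finset.filter_union, union_OC hM] at hcard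
  have : (Finset.Icc 1 (2 * n)).filter (fun t => t ≤ m) = Finset.Icc 1 m := by
    ext t; simp only [Finset.mem_filter, Finset.mem_Icc]; omega
  rw [this] at hcard
  simp only [Nat.card_Icc] at hcard
  omega

lemma conj_openers : (conjM n M).image Prod.fst
    = (M.image Prod.snd).image (fun c => 2 * n + 1 - c) := by
  unfold conjM
  rw [Finset.image_image, Finset.image_image]
  rfl

/-- The main pointwise equivalence for cells. -/
lemma cell_equiv (hM : IsMatching n M) (x y : ℕ) (hx1 : 1 ≤ x) (hxn : x ≤ n)
    (hy1 : 1 ≤ y) (hyn : y ≤ n) :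
    ((((conjM n M).image Prod.fst).filter fun t => t ≤ n - x + y).card ≤ n - x) ↔
    (((M.image Prod.fst).filter fun t => t ≤ n - y + x).card ≤ n - y) := by
  set C := M.image Prod.snd with hC
  have hCmem : ∀ c ∈ C, 1 ≤ c ∧ c ≤ 2 * n := by
    intro c hc
    simp only [hC, Finset.mem_image] at hc
    obtain ⟨q, hq, rfl⟩ := hc
    obtain ⟨h1, h2, h3⟩ := hM.1 q hq
    omega
  set K := n - x + y with hK
  -- Step 1: rewrite openers of conjM
  rw [conj_openers, Finset.filter_image]
  have hinj : Set.InjOn (fun c => 2 * n + 1 - c) ↑(C.filter fun c => 2 * n + 1 - c ≤ K) := by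
    intro a ha b hb h
    simp only [Finset.coe_filter, Set.mem_setOf_eq] at ha hb
    have := hCmem a ha.1
    have := hCmem b hb.1
    simp only at h
    omega
  rw [Finset.card_image_of_injOn hinj]
  -- Step 2: complement within C
  have hcompl : (C.filter fun c => 2 * n + 1 - c ≤ K).card
      + (C.filter fun c => c ≤ 2 * n - K).card = C.card := by
    have h := Finset.card_filter_add_card_filter_not
      (s := C) (p := fun c => 2 * n + 1 - c ≤ K)
    rw [← h]
    congr 1
    apply Finset.card_nbij' id id <;> intro a ha <;>
      simp only [Finset.mem_coe, Finset.mem_filter, id] at * <;>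
      · obtain ⟨ha1, ha2⟩ := ha
        have := hCmem a ha1
        exact ⟨ha1, by omega⟩
  have hCcard : C.card = n := card_C hM
  -- Step 3: counting
  have hm2 : 2 * n - K = n - y + x := by omega
  have hcount := key_count hM (n - y + x) (by omega)
  rw [← hC] at hcount
  rw [hm2] at hcompl
  have hle1 : (C.filter fun c => c ≤ 2 * n - K).card ≤ C.card := Finset.card_filter_le _ _
  rw [hm2] at hle1
  omega

end Aux

/-- Conjugation of matchings corresponds to transposition of Young diagrams; hence
`d(π*) = d(π)` and `m_p^{(A)}(π*) = m_p^{(A)}(π)` for all `p`. -/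
theorem conj_transposes_young_diagram (n : ℕ) (M : Finset (ℕ × ℕ))
    (hM : IsMatching n M) :
    cellsM n (conjM n M) = (cellsM n M).image (fun u => (u.2, u.1)) ∧
    (cellsM n (conjM n M)).card = (cellsM n M).card ∧
    (∀ p, mA n (conjM n M) p = mA n M p) := by
  have hcells : cellsM n (conjM n M) = (cellsM n M).image (fun u => (u.2, u.1)) := by
    ext ⟨x, y⟩
    simp only [cellsM, Finset.mem_image, Finset.mem_filter, Finset.mem_product,
      Finset.mem_Icc, Prod.exists, Prod.mk.injEq]
    constructor
    · rintro ⟨⟨⟨hx1, hxn⟩, hy1, hyn⟩, hcond⟩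
      refine ⟨y, x, ⟨⟨⟨hy1, hyn⟩, hx1, hxn⟩, ?_⟩, rfl, rfl⟩
      exact (cell_equiv hM x y hx1 hxn hy1 hyn).mp hcond
    · rintro ⟨a, b, ⟨⟨⟨ha1, han⟩, hb1, hbn⟩, hcond⟩, rfl, rfl⟩
      refine ⟨⟨⟨hb1, hbn⟩, ha1, han⟩, ?_⟩
      exact (cell_equiv hM b a hb1 hbn ha1 han).mpr hcond
  refine ⟨hcells, ?_, ?_⟩
  · rw [hcells]
    apply Finset.card_image_of_injective
    intro a b h
    simp only [Prod.mk.injEq] at h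
    exact Prod.ext h.2 h.1
  · intro p
    set f : ℕ × ℕ → ℕ × ℕ := fun q => (2 * n + 1 - q.2, 2 * n + 1 - q.1) with hf
    have hfinj : ∀ s ⊆ M, Set.InjOn f ↑s := by
      intro s hs a ha b hb h
      have hsa := hM.1 a (hs ha)
      have hsb := hM.1 b (hs hb)
      simp only [hf, Prod.mk.injEq] at h
      exact Prod.ext (by omega) (by omega)
    unfold mA conjM
    rw [← hf, Finset.filter_image, Finset.filter_image,
      Finset.card_image_of_injOn (hfinj _ (Finset.filter_subset _ _)),
      Finset.card_image_of_injOn (hfinj _ (Finset.filter_subset _ _))]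
    have e1 : (M.filter fun q => (f q).1 ≤ p ∧ p < (f q).2 ∧ (f q).2 < 2 * n + 1 - p)
        = M.filter fun q => p < q.1 ∧ q.1 < 2 * n + 1 - p ∧ 2 * n + 1 - p ≤ q.2 := by
      apply Finset.filter_congr
      intro q hq
      obtain ⟨h1, h2, h3⟩ := hM.1 q hq
      simp only [hf]
      constructor <;> intro h <;> omega
    have e2 : (M.filter fun q => p < (f q).1 ∧ (f q).1 < 2 * n + 1 - p ∧ 2 * n + 1 - p ≤ (f q).2)
        = M.filter fun q => q.1 ≤ p ∧ p < q.2 ∧ q.2 < 2 * n + 1 - p := by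
      apply Finset.filter_congr
      intro q hq
      obtain ⟨h1, h2, h3⟩ := hM.1 q hq
      simp only [hf]
      constructor <;> intro h <;> omega
    rw [e1, e2, Nat.add_comm]
end

section
/- Adding ℓ nested arches shifts multiplicities: for any matching π of size n and nonnegative integer ℓ, m_{p+ℓ}((π)_ℓ) = m_p(π) for all p, where (π)_ℓ denotes π surrounded by ℓ nested arches; moreover m_q((π)_ℓ) = 0 for 1 ≤ q ≤ ℓ. -/
/-- `(π)_ℓ`: the matching `π` of size `n` surrounded by `ℓ` nested arches
`{i, 2(n+ℓ)+1-i}`, `i = 1,…,ℓ`. -/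
def nestM (n : ℕ) (M : Finset (ℕ × ℕ)) (ℓ : ℕ) : Finset (ℕ × ℕ) :=
  (M.image fun q => (q.1 + ℓ, q.2 + ℓ)) ∪
  ((Finset.Icc 1 ℓ).image fun i => (i, 2 * (n + ℓ) + 1 - i))

/-- Adding `ℓ` nested arches shifts the Rule-A multiplicities:
`m_{p+ℓ}((π)_ℓ) = m_p(π)` for all `p`, and `m_q((π)_ℓ) = 0` for `1 ≤ q ≤ ℓ`. -/
theorem nested_arches_shift_multiplicities (n : ℕ) (M : Finset (ℕ × ℕ))
    (hM : IsMatching n M) (ℓ : ℕ) :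
    (∀ p, mA (n + ℓ) (nestM n M ℓ) (p + ℓ) = mA n M p) ∧
    (∀ q, 1 ≤ q → q ≤ ℓ → mA (n + ℓ) (nestM n M ℓ) q = 0) := by
  obtain ⟨hbd, -, -⟩ := hM
  have hinj : Function.Injective (fun q : ℕ × ℕ => (q.1 + ℓ, q.2 + ℓ)) := by
    intro a b h
    simp only [Prod.mk.injEq, Prod.ext_iff] at h ⊢
    omega
  constructor
  · intro p
    unfold mA nestM
    rw [Finset.filter_union, Finset.filter_union, Finset.filter_image,
        Finset.filter_image, Finset.filter_image, Finset.filter_image]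
    have e1 : ((Finset.Icc 1 ℓ).filter fun i =>
        (i : ℕ) ≤ p + ℓ ∧ p + ℓ < 2 * (n + ℓ) + 1 - i ∧
          2 * (n + ℓ) + 1 - i < 2 * (n + ℓ) + 1 - (p + ℓ)) = ∅ := by
      rw [Finset.filter_eq_empty_iff]
      intro i hi
      simp only [Finset.mem_Icc] at hi
      omega
    have e2 : ((Finset.Icc 1 ℓ).filter fun i =>
        p + ℓ < (i : ℕ) ∧ i < 2 * (n + ℓ) + 1 - (p + ℓ) ∧
          2 * (n + ℓ) + 1 - (p + ℓ) ≤ 2 * (n + ℓ) + 1 - i) = ∅ := by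
      rw [Finset.filter_eq_empty_iff]
      intro i hi
      simp only [Finset.mem_Icc] at hi
      omega
    rw [e1, e2]
    simp only [Finset.image_empty, Finset.union_empty]
    rw [Finset.card_image_of_injective _ hinj, Finset.card_image_of_injective _ hinj]
    have c1 : (M.filter fun q =>
        q.1 + ℓ ≤ p + ℓ ∧ p + ℓ < q.2 + ℓ ∧ q.2 + ℓ < 2 * (n + ℓ) + 1 - (p + ℓ)) =
        M.filter fun q => q.1 ≤ p ∧ p < q.2 ∧ q.2 < 2 * n + 1 - p := by
      apply Finset.filter_congr
      intro q hq
      have := hbd q hq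
      constructor <;> intro h <;> omega
    have c2 : (M.filter fun q =>
        p + ℓ < q.1 + ℓ ∧ q.1 + ℓ < 2 * (n + ℓ) + 1 - (p + ℓ) ∧
          2 * (n + ℓ) + 1 - (p + ℓ) ≤ q.2 + ℓ) =
        M.filter fun q => p < q.1 ∧ q.1 < 2 * n + 1 - p ∧ 2 * n + 1 - p ≤ q.2 := by
      apply Finset.filter_congr
      intro q hq
      have := hbd q hq
      constructor <;> intro h <;> omega
    rw [c1, c2]
  · intro q hq1 hq2
    unfold mA nestM
    rw [Finset.filter_union, Finset.filter_union, Finset.filter_image,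
        Finset.filter_image, Finset.filter_image, Finset.filter_image]
    have e1 : (M.filter fun r =>
        r.1 + ℓ ≤ q ∧ q < r.2 + ℓ ∧ r.2 + ℓ < 2 * (n + ℓ) + 1 - q) = ∅ := by
      rw [Finset.filter_eq_empty_iff]
      intro r hr
      have := hbd r hr
      omega
    have e2 : (M.filter fun r =>
        q < r.1 + ℓ ∧ r.1 + ℓ < 2 * (n + ℓ) + 1 - q ∧ 2 * (n + ℓ) + 1 - q ≤ r.2 + ℓ) = ∅ := by
      rw [Finset.filter_eq_empty_iff]
      intro r hr
      have := hbd r hr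
      omega
    have e3 : ((Finset.Icc 1 ℓ).filter fun i =>
        (i : ℕ) ≤ q ∧ q < 2 * (n + ℓ) + 1 - i ∧
          2 * (n + ℓ) + 1 - i < 2 * (n + ℓ) + 1 - q) = ∅ := by
      rw [Finset.filter_eq_empty_iff]
      intro i hi
      simp only [Finset.mem_Icc] at hi
      omega
    have e4 : ((Finset.Icc 1 ℓ).filter fun i =>
        q < (i : ℕ) ∧ i < 2 * (n + ℓ) + 1 - q ∧ 2 * (n + ℓ) + 1 - q ≤ 2 * (n + ℓ) + 1 - i) = ∅ := by
      rw [Finset.filter_eq_empty_iff]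
      intro i hi
      simp only [Finset.mem_Icc] at hi
      omega
    rw [e1, e2, e3, e4]
    simp
end
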